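/- arXiv:1306.1754 — 8 statements merged into one kernel-verified Lean document; each statement's English description precedes it below -/
import Mathlib

section
/- For all a > 0 and x ≥ 0, the series Σ_{n=0}^∞ x^n/(a+1)_n converges and P(a,x) = (x^a e^{−x}/Γ(a+1)) · Σ_{n=0}^∞ x^n/(a+1)_n; that is, the function n ↦ (x^a e^{−x}/Γ(a+1)) · x^n/(a+1)_n has sum P(a,x). -/
open MeasureTheory Real Set Filter Asymptotics
open scoped Topology

/-- Lower incomplete gamma function `γ(a,x) = ∫_0^x t^(a-1) e^(-t) dt`. -/
noncomputable def lowGamma (a x : ℝ) : ℝ := ∫ t in (0:ℝ)..x, t ^ (a - 1) * Real.exp (-t)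

/-- `P(a,x) = γ(a,x)/Γ(a)`. -/
noncomputable def Pfun (a x : ℝ) : ℝ := lowGamma a x / Real.Gamma a

/-- Pochhammer symbol `(c)_n = c (c+1) ⋯ (c+n-1)`. -/
noncomputable def poch (c : ℝ) (n : ℕ) : ℝ := ∏ k ∈ Finset.range n, (c + k)

lemma poch_pos {c : ℝ} (hc : 0 < c) (n : ℕ) : 0 < poch c n :=
  Finset.prod_pos fun k _ => by positivity

lemma poch_succ (c : ℝ) (n : ℕ) : poch c (n + 1) = poch c n * (c + n) :=
  Finset.prod_range_succ _ _

lemma poch_succ' (c : ℝ) (n : ℕ) : poch c (n + 1) = c * poch (c + 1) n := by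
  unfold poch
  rw [Finset.prod_range_succ']
  simp only [Nat.cast_zero, add_zero, Nat.cast_add, Nat.cast_one]
  rw [mul_comm]
  congr 1
  exact Finset.prod_congr rfl fun k _ => by ring

lemma lowGamma_eq_partialGamma {a : ℝ} {x : ℝ} (hx : 0 ≤ x) :
    Complex.partialGamma (a : ℂ) x = ((lowGamma a x : ℝ) : ℂ) := by
  unfold lowGamma Complex.partialGamma
  rw [← intervalIntegral.integral_ofReal]
  apply intervalIntegral.integral_congr
  intro t ht
  rw [uIcc_of_le hx] at ht
  have ht0 : 0 ≤ t := ht.1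
  dsimp only
  rw [Complex.ofReal_mul, Complex.ofReal_cpow ht0]
  push_cast
  ring

lemma lowGamma_add_one {a : ℝ} (ha : 0 < a) {x : ℝ} (hx : 0 ≤ x) :
    lowGamma (a + 1) x = a * lowGamma a x - Real.exp (-x) * x ^ a := by
  have hs : 0 < (a : ℂ).re := by simpa using ha
  have h := Complex.partialGamma_add_one hs hx
  have hcast : ((a : ℂ) + 1) = ((a + 1 : ℝ) : ℂ) := by push_cast; ring
  rw [hcast, lowGamma_eq_partialGamma hx, lowGamma_eq_partialGamma hx] at h
  have hpow : ((x : ℂ) ^ (a : ℂ)) = ((x ^ a : ℝ) : ℂ) := (Complex.ofReal_cpow hx a).symm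
  rw [hpow] at h
  exact_mod_cast h

lemma lowGamma_partial_sum {a : ℝ} (ha : 0 < a) {x : ℝ} (hx : 0 < x) (N : ℕ) :
    lowGamma a x = (∑ n ∈ Finset.range N,
        x ^ a * Real.exp (-x) / a * (x ^ n / poch (a + 1) n))
      + lowGamma (a + N) x / poch a N := by
  induction N with
  | zero => simp [poch]
  | succ N ih =>
    have haN : (0 : ℝ) < a + N := by positivity
    have h2 := lowGamma_add_one haN hx.le
    have hcast : a + ((N : ℝ) + 1) = (a + N) + 1 := by ring
    have h3 : lowGamma (a + ((N : ℕ) + 1 : ℕ)) x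
        = (a + N) * lowGamma (a + N) x - Real.exp (-x) * (x ^ a * x ^ N) := by
      push_cast
      rw [hcast, h2]
      congr 1
      rw [← Real.rpow_natCast x N, ← Real.rpow_add hx]
    have hp1 : poch a (N + 1) = poch a N * (a + N) := poch_succ a N
    have hpN : poch a N ≠ 0 := (poch_pos ha N).ne'
    have hqN : poch (a + 1) N ≠ 0 := (poch_pos (by linarith) N).ne'
    have haN' : (a + (N : ℝ)) ≠ 0 := haN.ne'
    have key : a * poch (a + 1) N = poch a N * (a + N) := by
      rw [← poch_succ' a N, hp1]
    rw [Finset.sum_range_succ, ih, h3, hp1]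
    have expand : x ^ a * Real.exp (-x) / a * (x ^ N / poch (a + 1) N)
        = Real.exp (-x) * (x ^ a * x ^ N) / (poch a N * (a + N)) := by
      rw [div_mul_div_comm, show poch a N * (a + (N:ℝ)) = a * poch (a + 1) N from key.symm]
      ring
    rw [expand]
    have hfin : lowGamma (a + (N:ℝ)) x / poch a N
        = Real.exp (-x) * (x ^ a * x ^ N) / (poch a N * (a + N))
          + ((a + (N:ℝ)) * lowGamma (a + (N:ℝ)) x - Real.exp (-x) * (x ^ a * x ^ N))
            / (poch a N * (a + N)) := by
      field_simp
      ring
    rw [hfin]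
    ring

lemma lowGamma_nonneg {b x : ℝ} (hx : 0 ≤ x) : 0 ≤ lowGamma b x := by
  apply intervalIntegral.integral_nonneg hx
  intro t ht
  exact mul_nonneg (Real.rpow_nonneg ht.1 _) (Real.exp_nonneg _)

lemma lowGamma_intervalIntegrable {b : ℝ} (hb : 0 < b) {x : ℝ} (hx : 0 ≤ x) :
    IntervalIntegrable (fun t : ℝ => t ^ (b - 1) * Real.exp (-t)) volume 0 x := by
  rw [intervalIntegrable_iff_integrableOn_Ioc_of_le hx]
  have h := (Real.GammaIntegral_convergent hb).mono_set (Ioc_subset_Ioi_self : Ioc (0:ℝ) x ⊆ Ioi 0)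
  exact h.congr_fun (fun t _ => mul_comm _ _) measurableSet_Ioc

lemma lowGamma_le {b : ℝ} (hb : 0 < b) {x : ℝ} (hx : 0 ≤ x) :
    lowGamma b x ≤ x ^ b / b := by
  have h1 := lowGamma_intervalIntegrable hb hx
  have h2 : IntervalIntegrable (fun t : ℝ => t ^ (b - 1)) volume 0 x :=
    intervalIntegral.intervalIntegrable_rpow' (by linarith)
  have hmono : lowGamma b x ≤ ∫ t in (0:ℝ)..x, t ^ (b - 1) := by
    apply intervalIntegral.integral_mono_on hx h1 h2
    intro t ht
    have : Real.exp (-t) ≤ 1 := by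
      rw [← Real.exp_zero]
      exact Real.exp_le_exp.mpr (by linarith [ht.1])
    have h0 : (0:ℝ) ≤ t ^ (b - 1) := Real.rpow_nonneg ht.1 _
    calc t ^ (b - 1) * Real.exp (-t) ≤ t ^ (b - 1) * 1 := by
          exact mul_le_mul_of_nonneg_left this h0
      _ = t ^ (b - 1) := mul_one _
  have hcomp : (∫ t in (0:ℝ)..x, t ^ (b - 1)) = x ^ b / b := by
    rw [integral_rpow (Or.inl (by linarith))]
    rw [sub_add_cancel, Real.zero_rpow hb.ne']
    ring_nf
  linarith [hmono, hcomp.le, hcomp.ge]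

lemma summable_poch_series {a : ℝ} (ha : 0 < a) {x : ℝ} (hx : 0 ≤ x) :
    Summable (fun n : ℕ => x ^ n / poch (a + 1) n) := by
  apply summable_of_ratio_norm_eventually_le (r := 1/2) (by norm_num)
  filter_upwards [eventually_ge_atTop ⌈2 * x⌉₊] with n hn
  have hq := poch_pos (by linarith : (0:ℝ) < a + 1) n
  have hden : (0:ℝ) < a + 1 + n := by positivity
  rw [Real.norm_eq_abs, Real.norm_eq_abs,
    abs_of_nonneg (div_nonneg (pow_nonneg hx _) (poch_pos (by linarith) (n+1)).le),
    abs_of_nonneg (div_nonneg (pow_nonneg hx _) hq.le), poch_succ, pow_succ]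
  have h2x : 2 * x ≤ a + 1 + n := by
    have h := Nat.le_ceil (2 * x)
    have : ((⌈2 * x⌉₊ : ℝ)) ≤ n := Nat.cast_le.mpr hn
    linarith
  have hfrac : x / (a + 1 + n) ≤ 1 / 2 := by
    rw [div_le_div_iff₀ hden (by norm_num)]
    linarith
  have heq : x ^ n * x / (poch (a + 1) n * (a + 1 + n))
      = x ^ n / poch (a + 1) n * (x / (a + 1 + n)) := by
    field_simp
  rw [heq]
  calc x ^ n / poch (a + 1) n * (x / (a + 1 + n))
      ≤ x ^ n / poch (a + 1) n * (1 / 2) :=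
        mul_le_mul_of_nonneg_left hfrac (by positivity)
    _ = 1 / 2 * (x ^ n / poch (a + 1) n) := by ring

theorem stmt1 (a x : ℝ) (ha : 0 < a) (hx : 0 ≤ x) :
    HasSum (fun n : ℕ => x ^ a * Real.exp (-x) / Real.Gamma (a + 1) * (x ^ n / poch (a + 1) n))
      (Pfun a x) := by
  rcases hx.eq_or_lt with hx0 | hx0
  · -- x = 0
    subst hx0
    have hxa : (0:ℝ) ^ a = 0 := Real.zero_rpow ha.ne'
    have hP : Pfun a 0 = 0 := by
      unfold Pfun lowGamma
      rw [intervalIntegral.integral_same]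
      simp
    rw [hP]
    convert hasSum_zero with n
    rw [hxa]
    ring
  · have hΓ : Real.Gamma a ≠ 0 := (Real.Gamma_pos_of_pos ha).ne'
    set t : ℕ → ℝ := fun n => x ^ n / poch (a + 1) n with ht
    have hsum : Summable t := summable_poch_series ha hx
    have htend0 : Tendsto t atTop (𝓝 0) := hsum.tendsto_atTop_zero
    have hrem : Tendsto (fun N : ℕ => lowGamma (a + N) x / poch a N) atTop (𝓝 0) := by
      have hbnd : ∀ N : ℕ, lowGamma (a + N) x / poch a N ≤ x ^ a / a * t N := by
        intro N
        have haN : (0:ℝ) < a + N := by positivity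
        have hpN := poch_pos ha N
        have hqN := poch_pos (by linarith : (0:ℝ) < a + 1) N
        have h1 : lowGamma (a + N) x ≤ x ^ (a + (N:ℝ)) / (a + N) := lowGamma_le haN hx
        have hxan : x ^ (a + (N:ℝ)) = x ^ a * x ^ N := by
          rw [Real.rpow_add hx0, Real.rpow_natCast]
        have key : a * poch (a + 1) N = poch a N * (a + N) := by
          rw [← poch_succ' a N, poch_succ a N]
        have h2 : lowGamma (a + N) x / poch a N ≤ x ^ (a + (N:ℝ)) / (a + N) / poch a N := by
          gcongr
        calc lowGamma (a + N) x / poch a N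
            ≤ x ^ (a + (N:ℝ)) / (a + N) / poch a N := h2
          _ = x ^ a / a * t N := by
              rw [hxan]
              show x ^ a * x ^ N / (a + (N:ℝ)) / poch a N
                  = x ^ a / a * (x ^ N / poch (a + 1) N)
              rw [div_div, div_mul_div_comm,
                show (a + (N:ℝ)) * poch a N = a * poch (a + 1) N from by linarith [key]]
      apply squeeze_zero (fun N => div_nonneg (lowGamma_nonneg hx) (poch_pos ha N).le) hbnd
      have := htend0.const_mul (x ^ a / a)
      simpa using this
    have key : Tendsto (fun N => ∑ n ∈ Finset.range N,
        x ^ a * Real.exp (-x) / a * t n) atTop (𝓝 (lowGamma a x)) := by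
      have heq : ∀ N, ∑ n ∈ Finset.range N, x ^ a * Real.exp (-x) / a * t n
          = lowGamma a x - lowGamma (a + N) x / poch a N := by
        intro N
        rw [lowGamma_partial_sum ha hx0 N]
        ring
      apply Tendsto.congr (fun N => (heq N).symm)
      simpa using tendsto_const_nhds.sub hrem
    have h1 : HasSum (fun n => x ^ a * Real.exp (-x) / a * t n)
        (x ^ a * Real.exp (-x) / a * ∑' n, t n) := hsum.hasSum.mul_left _
    have heqS : x ^ a * Real.exp (-x) / a * ∑' n, t n = lowGamma a x :=
      tendsto_nhds_unique h1.tendsto_sum_nat key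
    rw [heqS] at h1
    have h2 := h1.mul_left (Real.Gamma a)⁻¹
    have hfun : (fun n : ℕ => x ^ a * Real.exp (-x) / Real.Gamma (a + 1) * (x ^ n / poch (a + 1) n))
        = fun n => (Real.Gamma a)⁻¹ * (x ^ a * Real.exp (-x) / a * t n) := by
      funext n
      rw [ht, Real.Gamma_add_one ha.ne']
      field_simp
    rw [hfun]
    have hP : Pfun a x = (Real.Gamma a)⁻¹ * lowGamma a x := by
      unfold Pfun
      rw [div_eq_inv_mul]
    rw [hP]
    exact h2
end

section
/- For all a > 0 and x ≥ 0, the alternating series Σ_{n=0}^∞ (−1)^n x^n/((a+n) n!) converges and γ(a,x) = x^a · Σ_{n=0}^∞ (−1)^n x^n/((a+n) n!); that is, the function n ↦ x^a (−1)^n x^n/((a+n) n!) has sum γ(a,x). -/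
open MeasureTheory Real Set Filter Asymptotics

theorem stmt4 (a x : ℝ) (ha : 0 < a) (hx : 0 ≤ x) :
    HasSum (fun n : ℕ => x ^ a * ((-1 : ℝ) ^ n * x ^ n / ((a + n) * (n.factorial : ℝ))))
      (lowGamma a x) := by
  rcases hx.eq_or_lt with rfl | hx'
  · simp only [Real.zero_rpow ha.ne', zero_mul]
    have h0 : lowGamma a 0 = 0 := by simp [lowGamma]
    rw [h0]
    exact hasSum_zero
  set F : ℕ → ℝ → ℝ := fun n t => t ^ (a - 1) * ((-t) ^ n / n.factorial) with hF
  -- pointwise sum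
  have hsum : ∀ t : ℝ, HasSum (fun n => F n t) (t ^ (a - 1) * Real.exp (-t)) := by
    intro t
    have h1 : HasSum (fun n : ℕ => (-t) ^ n / n.factorial) (Real.exp (-t)) := by
      rw [Real.exp_eq_exp_ℝ, NormedSpace.exp_eq_tsum_div]
      exact (NormedSpace.expSeries_div_summable (-t)).hasSum
    exact h1.mul_left _
  -- each F n equals a constant times rpow on Ioc 0 x
  have hcong : ∀ n : ℕ, EqOn (F n)
      (fun t => ((-1 : ℝ) ^ n / n.factorial) * t ^ (a - 1 + n)) (Ioc 0 x) := by
    intro n t ht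
    have ht0 : (0 : ℝ) < t := ht.1
    simp only [hF]
    rw [neg_pow,
      show t ^ (a - 1 + (n:ℝ)) = t ^ (a - 1) * t ^ n by
        rw [Real.rpow_add ht0, Real.rpow_natCast]]
    ring
  have hrpow_int : ∀ n : ℕ, IntegrableOn (fun t : ℝ => t ^ (a - 1 + n)) (Ioc 0 x) := by
    intro n
    have h2 : IntervalIntegrable (fun t : ℝ => t ^ (a - 1 + n)) volume 0 x :=
      intervalIntegral.intervalIntegrable_rpow' (by
        have : (0:ℝ) ≤ n := Nat.cast_nonneg n
        linarith)
    rwa [intervalIntegrable_iff, uIoc_of_le hx] at h2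
  have hint : ∀ n : ℕ, IntegrableOn (F n) (Ioc 0 x) := by
    intro n
    exact IntegrableOn.congr_fun ((hrpow_int n).const_mul _)
      (fun t ht => (hcong n ht).symm) measurableSet_Ioc
  have hrpow_val : ∀ n : ℕ, ∫ t in Ioc 0 x, t ^ (a - 1 + n) = x ^ (a + n) / (a + n) := by
    intro n
    have hn0 : (0:ℝ) ≤ n := Nat.cast_nonneg n
    rw [← intervalIntegral.integral_of_le hx,
      integral_rpow (Or.inl (by linarith))]
    have he : a - 1 + (n:ℝ) + 1 = a + n := by ring
    rw [he, Real.zero_rpow (by positivity : (0:ℝ) < a + n).ne', sub_zero]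
  have key : ∀ n : ℕ, ∫ t in Ioc 0 x, F n t
      = ((-1 : ℝ) ^ n / n.factorial) * (x ^ (a + n) / (a + n)) := by
    intro n
    rw [setIntegral_congr_fun measurableSet_Ioc (hcong n), integral_const_mul, hrpow_val n]
  -- integral of the norm of each term
  have hnormval : ∀ n : ℕ,
      ∫ t in Ioc 0 x, ‖F n t‖ = (1 / n.factorial) * (x ^ (a + n) / (a + n)) := by
    intro n
    have heqon : EqOn (fun t => ‖F n t‖)
        (fun t => ((1 : ℝ) / n.factorial) * t ^ (a - 1 + n)) (Ioc 0 x) := by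
      intro t ht
      have ht0 : (0 : ℝ) < t := ht.1
      simp only
      rw [hcong n ht, norm_mul, norm_div, norm_pow, norm_neg, norm_one, one_pow,
        Real.norm_of_nonneg (Real.rpow_nonneg ht0.le _),
        Real.norm_of_nonneg (Nat.cast_nonneg _)]
    rw [setIntegral_congr_fun measurableSet_Ioc heqon, integral_const_mul, hrpow_val n]
  have hsummable : Summable fun n : ℕ => ∫ t in Ioc 0 x, ‖F n t‖ := by
    have hbig : Summable fun n : ℕ => (x ^ a / a) * (x ^ n / n.factorial) :=
      ((NormedSpace.expSeries_div_summable x)).mul_left _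
    refine Summable.of_nonneg_of_le (fun n => ?_) (fun n => ?_) hbig
    · exact integral_nonneg fun t => norm_nonneg _
    · have hn0 : (0:ℝ) ≤ n := Nat.cast_nonneg n
      have hfn : (0:ℝ) < n.factorial := by positivity
      rw [hnormval n, Real.rpow_add hx', Real.rpow_natCast, div_mul_div_comm, one_mul]
      calc x ^ a * x ^ n / ((n.factorial : ℝ) * (a + n))
          ≤ x ^ a * x ^ n / ((n.factorial : ℝ) * a) := by
            gcongr
            all_goals first | positivity | linarith
        _ = x ^ a / a * (x ^ n / n.factorial) := by
            field_simp
  have H := MeasureTheory.hasSum_integral_of_summable_integral_norm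
    (μ := volume.restrict (Ioc 0 x)) hint hsummable
  have heq : (fun n : ℕ => x ^ a * ((-1:ℝ)^n * x^n / ((a+n)*n.factorial)))
      = fun n => ∫ t in Ioc 0 x, F n t := by
    funext n
    rw [key n, Real.rpow_add hx', Real.rpow_natCast]
    have han : (a + (n:ℝ)) ≠ 0 := by positivity
    have hfn : ((n.factorial:ℝ)) ≠ 0 := by positivity
    field_simp
  rw [heq]
  have hval : ∫ t in Ioc 0 x, (∑' n, F n t) = lowGamma a x := by
    rw [lowGamma, intervalIntegral.integral_of_le hx]
    exact integral_congr_ae (Eventually.of_forall fun t => (hsum t).tsum_eq)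
  rw [← hval]
  exact H
end

section
/- Fix a > 0. For every nonnegative integer N, the upper incomplete gamma function satisfies, as x → ∞, Γ(a,x) − x^{a−1} e^{−x} Σ_{n=0}^{N−1} (−1)^n (1−a)_n x^{−n} = O(x^{a−1−N} e^{−x}); i.e., the difference is big-O of x^{a−1−N} e^{−x} along the filter at infinity. -/
open MeasureTheory Real Set Filter Asymptotics

/-- Upper incomplete gamma function `Γ(a,x) = ∫_x^∞ t^(a-1) e^(-t) dt`. -/
noncomputable def upGamma (a x : ℝ) : ℝ := ∫ t in Set.Ioi x, t ^ (a - 1) * Real.exp (-t)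

lemma integ_aux (b x : ℝ) (hx : 0 < x) :
    IntegrableOn (fun t : ℝ => t ^ b * Real.exp (-t)) (Set.Ioi x) := by
  apply integrable_of_isBigO_exp_neg (b := 1/2) (by norm_num)
  · apply ContinuousOn.mul
    · exact continuousOn_id.rpow_const fun t ht => Or.inl (ne_of_gt (lt_of_lt_of_le hx ht))
    · exact (Real.continuous_exp.comp continuous_neg).continuousOn
  · have h := tendsto_rpow_mul_exp_neg_mul_atTop_nhds_zero b (1/2) (by norm_num)
    have h1 : (fun t : ℝ => t ^ b * Real.exp (-t))
        = fun t : ℝ => (t ^ b * Real.exp (-(1/2) * t)) * Real.exp (-(1/2) * t) := by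
      funext t
      rw [mul_assoc, ← Real.exp_add]
      ring_nf
    rw [h1]
    simpa using (h.isBigO_one ℝ).mul (isBigO_refl (fun t : ℝ => Real.exp (-(1/2) * t)) Filter.atTop)

lemma ibp_aux (b x : ℝ) (hx : 0 < x) :
    (∫ t in Set.Ioi x, t ^ (b - 1) * Real.exp (-t))
      = x ^ (b - 1) * Real.exp (-x) + (b - 1) * ∫ t in Set.Ioi x, t ^ (b - 2) * Real.exp (-t) := by
  have key : (∫ t in Set.Ioi x, (t ^ (b - 1) * Real.exp (-t) - (b - 1) * (t ^ (b - 2) * Real.exp (-t))))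
      = x ^ (b - 1) * Real.exp (-x) := by
    have hderiv : ∀ t ∈ Set.Ici x, HasDerivAt (fun t : ℝ => -(t ^ (b - 1) * Real.exp (-t)))
        (t ^ (b - 1) * Real.exp (-t) - (b - 1) * (t ^ (b - 2) * Real.exp (-t))) t := by
      intro t ht
      have ht0 : t ≠ 0 := ne_of_gt (lt_of_lt_of_le hx ht)
      have h1 : HasDerivAt (fun t : ℝ => t ^ (b - 1)) ((b - 1) * t ^ (b - 2)) t := by
        have := Real.hasDerivAt_rpow_const (p := b - 1) (Or.inl ht0)
        convert this using 2
        ring_nf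
      have h2 : HasDerivAt (fun t : ℝ => Real.exp (-t)) (-Real.exp (-t)) t := by
        simpa [Function.comp_def] using (Real.hasDerivAt_exp (-t)).comp t (hasDerivAt_neg t)
      have := (h1.mul h2).neg
      refine HasDerivAt.congr_deriv this ?_
      ring
    have htend : Tendsto (fun t : ℝ => -(t ^ (b - 1) * Real.exp (-t))) atTop (nhds 0) := by
      have := (tendsto_rpow_mul_exp_neg_mul_atTop_nhds_zero (b - 1) 1 one_pos).neg
      simpa using this
    have hint : IntegrableOn (fun t : ℝ =>
        t ^ (b - 1) * Real.exp (-t) - (b - 1) * (t ^ (b - 2) * Real.exp (-t))) (Set.Ioi x) :=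
      (integ_aux (b - 1) x hx).sub ((integ_aux (b - 2) x hx).const_mul _)
    rw [integral_Ioi_of_hasDerivAt_of_tendsto' hderiv hint htend]
    ring
  rw [MeasureTheory.integral_sub (integ_aux (b - 1) x hx) ((integ_aux (b - 2) x hx).const_mul _),
    MeasureTheory.integral_const_mul] at key
  linarith [key]

lemma bigO_G : ∀ (n : ℕ) (b : ℝ), b ≤ n + 1 →
    (fun x : ℝ => ∫ t in Set.Ioi x, t ^ (b - 1) * Real.exp (-t))
      =O[Filter.atTop] fun x : ℝ => x ^ (b - 1) * Real.exp (-x) := by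
  intro n
  induction n with
  | zero =>
    intro b hb
    have hb1 : b - 1 ≤ 0 := by push_cast at hb; linarith
    apply IsBigO.of_bound 1
    filter_upwards [eventually_ge_atTop 1] with x hx
    have hx0 : (0:ℝ) < x := lt_of_lt_of_le one_pos hx
    have hnorm : (0:ℝ) ≤ ∫ t in Set.Ioi x, t ^ (b - 1) * Real.exp (-t) :=
      MeasureTheory.setIntegral_nonneg measurableSet_Ioi fun t ht =>
        mul_nonneg (Real.rpow_nonneg (hx0.trans ht).le _) (Real.exp_pos _).le
    have hexp : IntegrableOn (fun t : ℝ => Real.exp (-t)) (Set.Ioi x) := by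
      simpa using exp_neg_integrableOn_Ioi x one_pos
    have hbound : ∀ t ∈ Set.Ioi x, t ^ (b - 1) * Real.exp (-t) ≤ x ^ (b - 1) * Real.exp (-t) := by
      intro t ht
      exact mul_le_mul_of_nonneg_right
        (Real.rpow_le_rpow_of_nonpos hx0 (le_of_lt ht) hb1) (Real.exp_pos _).le
    rw [Real.norm_eq_abs, Real.norm_eq_abs, one_mul, abs_of_nonneg hnorm]
    calc (∫ t in Set.Ioi x, t ^ (b - 1) * Real.exp (-t))
        ≤ ∫ t in Set.Ioi x, x ^ (b - 1) * Real.exp (-t) :=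
          MeasureTheory.setIntegral_mono_on (integ_aux (b-1) x hx0)
            (hexp.const_mul _) measurableSet_Ioi hbound
      _ = x ^ (b - 1) * Real.exp (-x) := by
          rw [MeasureTheory.integral_const_mul, integral_exp_neg_Ioi]
      _ ≤ |x ^ (b - 1) * Real.exp (-x)| := le_abs_self _
  | succ n ih =>
    intro b hb
    by_cases hb' : b ≤ n + 1
    · exact ih b hb'
    have hIH := ih (b - 1) (by push_cast at hb ⊢; linarith)
    have h21 : b - 1 - 1 = b - 2 := by ring
    rw [h21] at hIH
    have heq : (fun x : ℝ => ∫ t in Set.Ioi x, t ^ (b - 1) * Real.exp (-t))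
        =ᶠ[Filter.atTop] fun x : ℝ =>
          x ^ (b - 1) * Real.exp (-x) + (b - 1) * ∫ t in Set.Ioi x, t ^ (b - 2) * Real.exp (-t) := by
      filter_upwards [eventually_gt_atTop 0] with x hx
      exact ibp_aux b x hx
    have hO : (fun x : ℝ =>
          x ^ (b - 1) * Real.exp (-x) + (b - 1) * ∫ t in Set.Ioi x, t ^ (b - 2) * Real.exp (-t))
        =O[Filter.atTop] fun x : ℝ => x ^ (b - 1) * Real.exp (-x) := by
      apply IsBigO.add (isBigO_refl _ _)
      apply (hIH.const_mul_left (b - 1)).trans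
      apply IsBigO.of_bound 1
      filter_upwards [eventually_ge_atTop 1] with x hx
      have hx0 : (0:ℝ) < x := lt_of_lt_of_le one_pos hx
      rw [one_mul, Real.norm_eq_abs, Real.norm_eq_abs, abs_mul, abs_mul,
        abs_of_nonneg (Real.rpow_nonneg hx0.le _), abs_of_nonneg (Real.rpow_nonneg hx0.le _)]
      have : x ^ (b - 2) ≤ x ^ (b - 1) :=
        Real.rpow_le_rpow_of_exponent_le hx (by linarith)
      exact mul_le_mul_of_nonneg_right this (abs_nonneg _)
    exact hO.congr' heq.symm EventuallyEq.rfl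

theorem stmt5 (a : ℝ) (ha : 0 < a) (N : ℕ) :
    (fun x : ℝ => upGamma a x - x ^ (a - 1) * Real.exp (-x) *
        ∑ n ∈ Finset.range N, (-1 : ℝ) ^ n * poch (1 - a) n * x ^ (-(n : ℝ)))
      =O[Filter.atTop] fun x : ℝ => x ^ (a - 1 - (N : ℝ)) * Real.exp (-x) := by
  have key : ∀ x : ℝ, 0 < x → upGamma a x - x ^ (a - 1) * Real.exp (-x) *
        ∑ n ∈ Finset.range N, (-1 : ℝ) ^ n * poch (1 - a) n * x ^ (-(n : ℝ))
      = (-1 : ℝ) ^ N * poch (1 - a) N * ∫ t in Set.Ioi x, t ^ (a - N - 1) * Real.exp (-t) := by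
    intro x hx
    induction N with
    | zero => simp [upGamma, poch]
    | succ m ihm =>
      rw [Finset.sum_range_succ, mul_add, ← sub_sub, ihm]
      have hpoch : poch (1 - a) (m + 1) = poch (1 - a) m * (1 - a + m) := by
        rw [poch, poch, Finset.prod_range_succ]
      have hsplit : x ^ (a - 1) * Real.exp (-x) * ((-1:ℝ) ^ m * poch (1 - a) m * x ^ (-(m:ℝ)))
          = (-1:ℝ) ^ m * poch (1 - a) m * (x ^ (a - (m:ℝ) - 1) * Real.exp (-x)) := by
        rw [show x ^ (a - (m:ℝ) - 1) = x ^ (a - 1) * x ^ (-(m:ℝ)) by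
          rw [← Real.rpow_add hx]; ring_nf]
        ring
      rw [hsplit]
      have hibp := ibp_aux (a - m) x hx
      have h2 : a - (m:ℝ) - 2 = a - ((m+1:ℕ):ℝ) - 1 := by push_cast; ring
      have h1 : a - (m:ℝ) - 1 - 1 = a - (m:ℝ) - 2 := by ring
      rw [show a - (m:ℝ) - 1 = a - (m:ℝ) - 1 from rfl] at hibp
      have hibp' : (∫ t in Set.Ioi x, t ^ (a - (m:ℝ) - 1) * Real.exp (-t))
          = x ^ (a - (m:ℝ) - 1) * Real.exp (-x) + (a - (m:ℝ) - 1) *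
            ∫ t in Set.Ioi x, t ^ (a - ((m+1:ℕ):ℝ) - 1) * Real.exp (-t) := by
        rw [← h2, ← h1]
        convert hibp using 3 <;> ring_nf
      rw [hibp', hpoch]
      push_cast
      ring
  have heq : (fun x : ℝ => upGamma a x - x ^ (a - 1) * Real.exp (-x) *
        ∑ n ∈ Finset.range N, (-1 : ℝ) ^ n * poch (1 - a) n * x ^ (-(n : ℝ)))
      =ᶠ[Filter.atTop] fun x : ℝ =>
        (-1 : ℝ) ^ N * poch (1 - a) N * ∫ t in Set.Ioi x, t ^ (a - N - 1) * Real.exp (-t) := by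
    filter_upwards [eventually_gt_atTop 0] with x hx using key x hx
  have hG := bigO_G ⌈|a|⌉₊ (a - N) (by
    have h1 := Nat.le_ceil |a|
    have h2 := le_abs_self a
    have h3 : (0:ℝ) ≤ N := Nat.cast_nonneg N
    linarith)
  have hO : (fun x : ℝ =>
        (-1 : ℝ) ^ N * poch (1 - a) N * ∫ t in Set.Ioi x, t ^ (a - N - 1) * Real.exp (-t))
      =O[Filter.atTop] fun x : ℝ => x ^ (a - 1 - (N : ℝ)) * Real.exp (-x) := by
    have hee : a - 1 - (N:ℝ) = a - (N:ℝ) - 1 := by ring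
    simp only [hee]
    exact hG.const_mul_left _
  exact hO.congr' heq.symm EventuallyEq.rfl
end

section
/- The scaled gamma function satisfies the first-order Stirling expansion Γ*(a) = 1 + 1/(12a) + O(a^{−2}) as a → ∞; that is, the function a ↦ Γ*(a) − 1 − 1/(12a) is big-O of a^{−2} along the filter at infinity. -/
open MeasureTheory Real Set Filter Asymptotics

/-- The scaled gamma function `Γ*(a) = Γ(a)/(√(2π/a) a^a e^(-a))`. -/
noncomputable def Gammastar (a : ℝ) : ℝ :=
  Real.Gamma a / (Real.sqrt (2 * Real.pi / a) * a ^ a * Real.exp (-a))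

noncomputable def muF (x : ℝ) : ℝ :=
  Real.log (Real.Gamma x) - (x - 1/2) * Real.log x + x - Real.log (2*Real.pi) / 2

noncomputable def ggF (x : ℝ) : ℝ := (x + 1/2) * Real.log (1 + 1/x) - 1

lemma muF_rec {x : ℝ} (hx : 0 < x) : muF x - muF (x+1) = ggF x := by
  have h1 : Real.Gamma (x+1) = x * Real.Gamma x := Real.Gamma_add_one hx.ne'
  have hg : 0 < Real.Gamma x := Real.Gamma_pos_of_pos hx
  have h2 : Real.log (Real.Gamma (x+1)) = Real.log x + Real.log (Real.Gamma x) := by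
    rw [h1, Real.log_mul hx.ne' hg.ne']
  have h3 : Real.log (x+1) = Real.log x + Real.log (1 + 1/x) := by
    rw [← Real.log_mul hx.ne' (by positivity)]
    congr 1
    field_simp
  simp only [muF, ggF, h2, h3]
  ring

lemma ggF_approx {x : ℝ} (hx : 1 ≤ x) :
    |ggF x - 1/(3*(2*x+1)^2)| ≤ 1/(8*x^3) := by
  have hx0 : 0 < x := lt_of_lt_of_le one_pos hx
  set t : ℝ := 1/(2*x+1) with ht
  have ht0 : 0 < t := by positivity
  have ht1 : t < 1 := by
    rw [ht, div_lt_one (by linarith)]; linarith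
  have h1t : (0:ℝ) < 1 - t := by linarith
  have habs : |t| < 1 := by rw [abs_of_pos ht0]; exact ht1
  have habs' : |(-t)| < 1 := by rwa [abs_neg]
  have hA := Real.abs_log_sub_add_sum_range_le habs 3
  have hB := Real.abs_log_sub_add_sum_range_le habs' 3
  rw [abs_of_pos ht0] at hA
  rw [abs_neg, abs_of_pos ht0] at hB
  simp only [Finset.sum_range_succ, Finset.sum_range_zero] at hA hB
  norm_num at hA hB
  have hlog : Real.log (1 + 1/x) = Real.log (1+t) - Real.log (1-t) := by
    rw [← Real.log_div (by positivity) h1t.ne']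
    congr 1
    rw [ht]; field_simp; ring
  have key : |Real.log (1+t) - Real.log (1-t) - (2*t + 2*t^3/3)| ≤ 2*(t^4/(1-t)) := by
    have h := (abs_sub (-t + t^2/2 + (-t)^3/3 + Real.log (1+t))
        (t + t^2/2 + t^3/3 + Real.log (1-t))).trans (add_le_add hB hA)
    calc |Real.log (1+t) - Real.log (1-t) - (2*t + 2*t^3/3)|
        = |(-t + t^2/2 + (-t)^3/3 + Real.log (1+t)) - (t + t^2/2 + t^3/3 + Real.log (1-t))| := by
          congr 1; ring
      _ ≤ _ := by linarith
  -- ggF x - t^2/3 = (1/(2t)) * (log(1+t) - log(1-t) - (2t + 2t^3/3))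
  have hxt : x + 1/2 = 1/(2*t) := by rw [ht]; field_simp
  have hgg : ggF x - 1/(3*(2*x+1)^2) =
      (1/(2*t)) * (Real.log (1+t) - Real.log (1-t) - (2*t + 2*t^3/3)) := by
    simp only [ggF, hlog, hxt]
    have : 1/(3*(2*x+1)^2) = t^2/3 := by rw [ht]; field_simp
    rw [this]
    field_simp
    ring
  rw [hgg, abs_mul, abs_of_pos (by positivity : (0:ℝ) < 1/(2*t))]
  have step : 1/(2*t) * |Real.log (1+t) - Real.log (1-t) - (2*t + 2*t^3/3)|
      ≤ 1/(2*t) * (2*(t^4/(1-t))) :=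
    mul_le_mul_of_nonneg_left key (by positivity)
  refine step.trans ?_
  have h2x : (0:ℝ) < 2*x+1 := by linarith
  rw [ht]
  have e1 : 1 - 1/(2*x+1) = (2*x)/(2*x+1) := by field_simp; ring
  rw [e1]
  have e2 : 1/(2*(1/(2*x+1))) * (2*((1/(2*x+1))^4 / ((2*x)/(2*x+1)))) = 1/(2*x*(2*x+1)^2) := by
    field_simp
  rw [e2, div_le_div_iff₀ (by positivity) (by positivity)]
  nlinarith [sq_nonneg x]

lemma gammastar_eq {x : ℝ} (hx : 0 < x) : Gammastar x = Real.exp (muF x) := by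
  have hpi : (0:ℝ) < 2 * Real.pi := by positivity
  have hD : (0:ℝ) < Real.sqrt (2 * Real.pi / x) * x ^ x * Real.exp (-x) := by
    have h1 : (0:ℝ) < Real.sqrt (2 * Real.pi / x) := Real.sqrt_pos.mpr (by positivity)
    have h2 : (0:ℝ) < x ^ x := Real.rpow_pos_of_pos hx _
    positivity
  have hG : (0:ℝ) < Real.Gamma x := Real.Gamma_pos_of_pos hx
  have hGs : (0:ℝ) < Gammastar x := div_pos hG hD
  rw [← Real.exp_log hGs]
  congr 1
  rw [Gammastar, Real.log_div hG.ne' hD.ne', Real.log_mul (by positivity) (Real.exp_ne_zero _),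
    Real.log_mul (by positivity) (Real.rpow_pos_of_pos hx x).ne', Real.log_exp,
    Real.log_sqrt (by positivity), Real.log_div hpi.ne' hx.ne', Real.log_rpow hx, muF]
  ring

lemma muF_nat_eq (n : ℕ) (hn : 1 ≤ n) :
    muF n = Real.log (Stirling.stirlingSeq n) - Real.log (Real.sqrt Real.pi) := by
  have hn0 : (0:ℝ) < n := by exact_mod_cast hn
  have hGamma : Real.Gamma n = ((Nat.factorial (n-1) : ℕ) : ℝ) := by
    obtain ⟨m, rfl⟩ := Nat.exists_eq_add_of_le hn
    rw [add_comm]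
    push_cast
    rw [Real.Gamma_nat_eq_factorial m]
  have hfact : ((Nat.factorial n : ℕ) : ℝ) = n * Real.Gamma n := by
    rw [hGamma]
    obtain ⟨m, rfl⟩ := Nat.exists_eq_add_of_le hn
    rw [add_comm]
    push_cast [Nat.factorial_succ]
    simp
  have hlogfact : Real.log (Nat.factorial n) = Real.log n + Real.log (Real.Gamma n) := by
    rw [hfact, Real.log_mul hn0.ne' (Real.Gamma_pos_of_pos hn0).ne']
  rw [Stirling.log_stirlingSeq_formula, hlogfact,
    Real.log_mul two_ne_zero hn0.ne',
    Real.log_div hn0.ne' (Real.exp_ne_zero 1), Real.log_exp,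
    Real.log_sqrt Real.pi_pos.le]
  simp only [muF, Real.log_mul two_ne_zero Real.pi_ne_zero]
  ring

lemma muF_nat_tendsto : Tendsto (fun n : ℕ => muF n) atTop (nhds 0) := by
  have h1 : Tendsto (fun n : ℕ => Real.log (Stirling.stirlingSeq n)) atTop
      (nhds (Real.log (Real.sqrt Real.pi))) := by
    exact (Real.continuousAt_log (by positivity)).tendsto.comp
      Stirling.tendsto_stirlingSeq_sqrt_pi
  have h2 := h1.sub (tendsto_const_nhds (x := Real.log (Real.sqrt Real.pi)))
  rw [sub_self] at h2
  apply h2.congr'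
  filter_upwards [eventually_ge_atTop 1] with n hn
  exact (muF_nat_eq n hn).symm

lemma muF_bridge {n s : ℝ} (hn : 2 ≤ n) (hs0 : 0 ≤ s) (hs1 : s ≤ 1) :
    |muF (n + s) - muF n| ≤ 1/n := by
  have hn0 : (0:ℝ) < n := by linarith
  have hns : (0:ℝ) < n + s := by linarith
  have hcv := Real.convexOn_log_Gamma.2
  have hA : Real.log (Real.Gamma (n+s)) ≤
      (1-s) * Real.log (Real.Gamma n) + s * Real.log (Real.Gamma (n+1)) := by
    have := hcv (mem_Ioi.mpr hn0) (mem_Ioi.mpr (by linarith : (0:ℝ) < n+1))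
      (by linarith : (0:ℝ) ≤ 1-s) hs0 (by ring)
    simp only [smul_eq_mul, Function.comp_apply] at this
    have e : (1-s)*n + s*(n+1) = n + s := by ring
    rwa [e] at this
  have hB : Real.log (Real.Gamma (n+1)) ≤
      s * Real.log (Real.Gamma (n+s)) + (1-s) * Real.log (Real.Gamma (n+s+1)) := by
    have := hcv (mem_Ioi.mpr hns) (mem_Ioi.mpr (by linarith : (0:ℝ) < n+s+1))
      hs0 (by linarith : (0:ℝ) ≤ 1-s) (by ring)
    simp only [smul_eq_mul, Function.comp_apply] at this
    have e : s*(n+s) + (1-s)*(n+s+1) = n + 1 := by ring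
    rwa [e] at this
  have hC : Real.log (Real.Gamma (n+1)) = Real.log n + Real.log (Real.Gamma n) := by
    rw [Real.Gamma_add_one hn0.ne', Real.log_mul hn0.ne' (Real.Gamma_pos_of_pos hn0).ne']
  have hD : Real.log (Real.Gamma (n+s+1)) = Real.log (n+s) + Real.log (Real.Gamma (n+s)) := by
    rw [Real.Gamma_add_one hns.ne', Real.log_mul hns.ne' (Real.Gamma_pos_of_pos hns).ne']
  set L : ℝ := Real.log (n+s) - Real.log n with hL
  have hLratio : L = Real.log ((n+s)/n) := by rw [hL, Real.log_div hns.ne' hn0.ne']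
  have hLup : L ≤ s/n := by
    rw [hLratio]
    have := Real.log_le_sub_one_of_pos (show (0:ℝ) < (n+s)/n by positivity)
    have e : (n+s)/n - 1 = s/n := by field_simp; ring
    linarith [e ▸ this]
  have hLlo : s/(n+s) ≤ L := by
    rw [hLratio]
    have := Real.one_sub_inv_le_log_of_pos (show (0:ℝ) < (n+s)/n by positivity)
    have e : 1 - ((n+s)/n)⁻¹ = s/(n+s) := by
      rw [inv_div]; field_simp; ring
    linarith [e ▸ this]
  -- upper bound
  have hup : muF (n+s) - muF n ≤ 1/n := by
    have h1 : Real.log (Real.Gamma (n+s)) - Real.log (Real.Gamma n) ≤ s * Real.log n := by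
      nlinarith [hA, hC]
    have expand : muF (n+s) - muF n =
        (Real.log (Real.Gamma (n+s)) - Real.log (Real.Gamma n)) - (n+s-1/2) * L
          - s * Real.log n + s := by
      simp only [muF, hL]; ring
    have h2 : (n+s-1/2) * L ≥ (n+s-1/2) * (s/(n+s)) :=
      mul_le_mul_of_nonneg_left hLlo (by linarith)
    have h3 : (n+s-1/2) * (s/(n+s)) = s - (s/2)/(n+s) := by field_simp
    have h4 : (s/2)/(n+s) ≤ 1/n := by
      rw [div_le_div_iff₀ (by linarith) hn0]
      nlinarith
    linarith [expand, h1, h2, h3, h4]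
  -- lower bound
  have hlo : -(1/n) ≤ muF (n+s) - muF n := by
    have h1 : Real.log n - (1-s) * Real.log (n+s) ≤
        Real.log (Real.Gamma (n+s)) - Real.log (Real.Gamma n) := by
      nlinarith [hB, hC, hD]
    have expand : muF (n+s) - muF n =
        (Real.log (Real.Gamma (n+s)) - Real.log (Real.Gamma n))
          - (Real.log n - (1-s) * Real.log (n+s)) + s - (n+1/2) * L := by
      simp only [muF, hL]; ring
    have h2 : (n+1/2) * L ≤ (n+1/2) * (s/n) :=
      mul_le_mul_of_nonneg_left hLup (by linarith)
    have h3 : (n+1/2) * (s/n) = s + (s/2)/n := by field_simp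
    have h4 : (s/2)/n ≤ 1/n := by
      rw [div_le_div_iff₀ hn0 hn0]; nlinarith
    linarith [expand, h1, h2, h3, h4]
  rw [abs_le]; exact ⟨by linarith, hup⟩

lemma muF_tendsto : Tendsto muF atTop (nhds 0) := by
  have hfloor : Tendsto (fun y : ℝ => Nat.floor y) atTop atTop := tendsto_nat_floor_atTop
  have h1 : Tendsto (fun y : ℝ => muF (Nat.floor y : ℝ)) atTop (nhds 0) :=
    muF_nat_tendsto.comp hfloor
  have h2 : Tendsto (fun y : ℝ => 1/(Nat.floor y : ℝ)) atTop (nhds 0) :=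
    tendsto_one_div_atTop_nhds_zero_nat.comp hfloor
  have hlo := h1.sub h2
  have hhi := h1.add h2
  rw [sub_zero] at hlo
  rw [add_zero] at hhi
  refine tendsto_of_tendsto_of_tendsto_of_le_of_le' hlo hhi ?_ ?_ <;>
  · filter_upwards [eventually_ge_atTop (2:ℝ)] with y hy
    have hn2 : 2 ≤ Nat.floor y := Nat.le_floor (by exact_mod_cast hy)
    have hn2' : (2:ℝ) ≤ (Nat.floor y : ℝ) := by exact_mod_cast hn2
    have hfle : (Nat.floor y : ℝ) ≤ y := Nat.floor_le (by linarith)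
    have hylt : y < Nat.floor y + 1 := Nat.lt_floor_add_one y
    have hb := muF_bridge hn2' (s := y - Nat.floor y) (by linarith) (by linarith)
    rw [abs_le] at hb
    have e : (Nat.floor y : ℝ) + (y - Nat.floor y) = y := by ring
    rw [e] at hb
    obtain ⟨hb1, hb2⟩ := hb
    linarith

lemma ggF_upper {y : ℝ} (hy : 2 ≤ y) :
    ggF y ≤ (1/6)*(1/(2*y-1)) + (1/16)*(1/((y-1)*y))
      - ((1/6)*(1/(2*y+1)) + (1/16)*(1/(y*(y+1)))) := by
  have h := ggF_approx (by linarith : (1:ℝ) ≤ y)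
  rw [abs_le] at h
  have hy0 : (0:ℝ) < y := by linarith
  have d1 : (2*y-1) ≠ 0 := by nlinarith
  have d2 : (2*y+1) ≠ 0 := by nlinarith
  have d3 : (2*y+3) ≠ 0 := by nlinarith
  have d4 : (y-1) ≠ 0 := by nlinarith
  have d5 : y ≠ 0 := hy0.ne'
  have d6 : (y+1) ≠ 0 := by nlinarith
  have p1 : 1/(3*(2*y+1)^2) ≤ (1/6)*(1/(2*y-1)) - (1/6)*(1/(2*y+1)) := by
    have e : (1/6)*(1/(2*y-1)) - (1/6)*(1/(2*y+1)) = 1/(3*((2*y-1)*(2*y+1))) := by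
      field_simp; ring
    rw [e]
    apply one_div_le_one_div_of_le (by nlinarith)
    nlinarith
  have p2 : 1/(8*y^3) ≤ (1/16)*(1/((y-1)*y)) - (1/16)*(1/(y*(y+1))) := by
    have e : (1/16)*(1/((y-1)*y)) - (1/16)*(1/(y*(y+1))) = 1/(8*((y-1)*y*(y+1))) := by
      field_simp; ring
    rw [e]
    apply one_div_le_one_div_of_le (by nlinarith)
    nlinarith
  linarith [h.2]

lemma ggF_lower {y : ℝ} (hy : 2 ≤ y) :
    (1/6)*(1/(2*y+1)) - (1/16)*(1/((y-1)*y))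
      - ((1/6)*(1/(2*y+3)) - (1/16)*(1/(y*(y+1)))) ≤ ggF y := by
  have h := ggF_approx (by linarith : (1:ℝ) ≤ y)
  rw [abs_le] at h
  have hy0 : (0:ℝ) < y := by linarith
  have d1 : (2*y-1) ≠ 0 := by nlinarith
  have d2 : (2*y+1) ≠ 0 := by nlinarith
  have d3 : (2*y+3) ≠ 0 := by nlinarith
  have d4 : (y-1) ≠ 0 := by nlinarith
  have d5 : y ≠ 0 := hy0.ne'
  have d6 : (y+1) ≠ 0 := by nlinarith
  have q1 : (1/6)*(1/(2*y+1)) - (1/6)*(1/(2*y+3)) ≤ 1/(3*(2*y+1)^2) := by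
    have e : (1/6)*(1/(2*y+1)) - (1/6)*(1/(2*y+3)) = 1/(3*((2*y+1)*(2*y+3))) := by
      field_simp; ring
    rw [e]
    apply one_div_le_one_div_of_le (by nlinarith)
    nlinarith
  have q2 : 1/(8*y^3) ≤ (1/16)*(1/((y-1)*y)) - (1/16)*(1/(y*(y+1))) := by
    have e : (1/16)*(1/((y-1)*y)) - (1/16)*(1/(y*(y+1))) = 1/(8*((y-1)*y*(y+1))) := by
      field_simp; ring
    rw [e]
    apply one_div_le_one_div_of_le (by nlinarith)
    nlinarith
  linarith [h.1]

lemma muF_telescope {x : ℝ} (hx : 0 < x) (N : ℕ) :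
    muF x = muF (x + N) + ∑ n ∈ Finset.range N, ggF (x + n) := by
  induction N with
  | zero => simp
  | succ N ih =>
      rw [Finset.sum_range_succ, ih]
      have h := muF_rec (show (0:ℝ) < x + N by positivity)
      push_cast
      rw [show x + ((N:ℝ) + 1) = x + (N:ℝ) + 1 from by ring]
      linarith

set_option maxHeartbeats 2000000 in
lemma muF_est {x : ℝ} (hx : 2 ≤ x) :
    1/(6*(2*x+1)) - 1/(16*((x-1)*x)) ≤ muF x ∧
      muF x ≤ 1/(6*(2*x-1)) + 1/(16*((x-1)*x)) := by
  have hx0 : (0:ℝ) < x := by linarith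
  set F : ℕ → ℝ := fun n => (1/6)*(1/(2*(x+n)-1)) + (1/16)*(1/((x+n-1)*(x+n))) with hF
  set G : ℕ → ℝ := fun n => (1/6)*(1/(2*(x+n)+1)) - (1/16)*(1/((x+n-1)*(x+n))) with hG
  have hxn : ∀ n : ℕ, (2:ℝ) ≤ x + n := fun n => by
    have : (0:ℝ) ≤ n := Nat.cast_nonneg n; linarith
  have hFstep : ∀ n : ℕ, ggF (x + n) ≤ F n - F (n+1) := by
    intro n
    have h := ggF_upper (hxn n)
    have e1 : F (n+1) = (1/6)*(1/(2*(x+n)+1)) + (1/16)*(1/((x+n)*(x+n+1))) := by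
      simp only [hF]; push_cast; ring_nf
    rw [e1]
    simp only [hF]
    linarith [h]
  have hGstep : ∀ n : ℕ, G n - G (n+1) ≤ ggF (x + n) := by
    intro n
    have h := ggF_lower (hxn n)
    have e1 : G (n+1) = (1/6)*(1/(2*(x+n)+3)) - (1/16)*(1/((x+n)*(x+n+1))) := by
      simp only [hG]; push_cast; ring_nf
    rw [e1]
    simp only [hG]
    linarith [h]
  -- limit of partial sums
  have hxN : Tendsto (fun N : ℕ => x + N) atTop atTop :=
    tendsto_atTop_add_const_left atTop x tendsto_natCast_atTop_atTop
  have hmuN : Tendsto (fun N : ℕ => muF (x + N)) atTop (nhds 0) := muF_tendsto.comp hxN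
  have hsum : Tendsto (fun N : ℕ => ∑ n ∈ Finset.range N, ggF (x + n)) atTop (nhds (muF x)) := by
    have : (fun N : ℕ => ∑ n ∈ Finset.range N, ggF (x + n))
        = fun N : ℕ => muF x - muF (x + N) := by
      funext N
      have := muF_telescope hx0 N
      linarith
    rw [this]
    simpa using tendsto_const_nhds.sub hmuN
  -- F N, G N → 0
  have hFbound : ∀ N : ℕ, 1 ≤ N → |F N| ≤ 1/(N:ℝ) ∧ |G N| ≤ 1/(N:ℝ) := by
    intro N hN
    have hN0 : (1:ℝ) ≤ (N:ℝ) := by exact_mod_cast hN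
    have h1 : (0:ℝ) < 2*(x+N)-1 := by linarith
    have h2 : (0:ℝ) < (x+N-1)*(x+N) := by nlinarith
    have h3 : (0:ℝ) < 2*(x+N)+1 := by linarith
    have ha : (1/6)*(1/(2*(x+N)-1)) ≤ 1/(2*N) := by
      rw [one_div_mul_one_div, div_le_div_iff₀ (by nlinarith) (by linarith)]; nlinarith
    have hb : (1/16)*(1/((x+N-1)*(x+N))) ≤ 1/(2*N) := by
      rw [one_div_mul_one_div, div_le_div_iff₀ (by nlinarith) (by linarith)]; nlinarith
    have hc : (1/6)*(1/(2*(x+N)+1)) ≤ 1/(2*N) := by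
      rw [one_div_mul_one_div, div_le_div_iff₀ (by nlinarith) (by linarith)]; nlinarith
    have hd : (0:ℝ) < (1/6)*(1/(2*(x+N)+1)) :=
      mul_pos (by norm_num) (one_div_pos.mpr h3)
    have he' : (0:ℝ) < (1/16)*(1/((x+N-1)*(x+N))) :=
      mul_pos (by norm_num) (one_div_pos.mpr h2)
    have hf' : (0:ℝ) < (1/6)*(1/(2*(x+N)-1)) :=
      mul_pos (by norm_num) (one_div_pos.mpr h1)
    have hNN : 1/(2*(N:ℝ)) = 1/2 * (1/(N:ℝ)) := (one_div_mul_one_div 2 (N:ℝ)).symm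
    have hNpos : (0:ℝ) < 1/(N:ℝ) := by positivity
    constructor
    · rw [abs_of_nonneg (by simp only [hF]; positivity)]
      simp only [hF]; linarith
    · rw [abs_le]
      constructor <;> simp only [hG] <;> linarith
  have hFlim : Tendsto F atTop (nhds 0) := by
    refine squeeze_zero_norm' ?_ tendsto_one_div_atTop_nhds_zero_nat
    filter_upwards [eventually_ge_atTop 1] with N hN
    exact (hFbound N hN).1
  have hGlim : Tendsto G atTop (nhds 0) := by
    refine squeeze_zero_norm' ?_ tendsto_one_div_atTop_nhds_zero_nat
    filter_upwards [eventually_ge_atTop 1] with N hN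
    exact (hFbound N hN).2
  constructor
  · -- lower: G 0 - G N ≤ partial sum
    have hle : ∀ N : ℕ, G 0 - G N ≤ ∑ n ∈ Finset.range N, ggF (x + n) := by
      intro N
      rw [← Finset.sum_range_sub' G N]
      exact Finset.sum_le_sum fun n _ => hGstep n
    have hlim2 : Tendsto (fun N : ℕ => G 0 - G N) atTop (nhds (G 0)) := by
      simpa using tendsto_const_nhds.sub hGlim
    have := le_of_tendsto_of_tendsto' hlim2 hsum hle
    have e0 : G 0 = 1/(6*(2*x+1)) - 1/(16*((x-1)*x)) := by
      have d1 : (2*x+1) ≠ 0 := by nlinarith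
      have d2 : (x-1) ≠ 0 := by nlinarith
      have d3 : x ≠ 0 := hx0.ne'
      simp only [hG, Nat.cast_zero, add_zero, one_div_mul_one_div]
    linarith [e0 ▸ this]
  · -- upper
    have hle : ∀ N : ℕ, ∑ n ∈ Finset.range N, ggF (x + n) ≤ F 0 - F N := by
      intro N
      rw [← Finset.sum_range_sub' F N]
      exact Finset.sum_le_sum fun n _ => hFstep n
    have hlim2 : Tendsto (fun N : ℕ => F 0 - F N) atTop (nhds (F 0)) := by
      simpa using tendsto_const_nhds.sub hFlim
    have := le_of_tendsto_of_tendsto' hsum hlim2 hle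
    have e0 : F 0 = 1/(6*(2*x-1)) + 1/(16*((x-1)*x)) := by
      have d1 : (2*x-1) ≠ 0 := by nlinarith
      have d2 : (x-1) ≠ 0 := by nlinarith
      have d3 : x ≠ 0 := hx0.ne'
      simp only [hF, Nat.cast_zero, add_zero, one_div_mul_one_div]
    linarith [e0 ▸ this]

theorem stmt7 :
    (fun a : ℝ => Gammastar a - 1 - 1 / (12 * a)) =O[Filter.atTop] fun a : ℝ => 1 / a ^ 2 := by
  rw [Asymptotics.isBigO_iff]
  refine ⟨3, ?_⟩
  filter_upwards [eventually_ge_atTop (2:ℝ)] with x hx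
  have hx0 : (0:ℝ) < x := by linarith
  obtain ⟨hlo, hup⟩ := muF_est hx
  have hx2 : (0:ℝ) < x^2 := by positivity
  have key : |muF x - 1/(12*x)| ≤ 1/x^2 := by
    have a2 : 1/(16*((x-1)*x)) ≤ 1/(2*x^2) := by
      rw [div_le_div_iff₀ (by nlinarith) (by nlinarith)]; nlinarith
    have e : 1/(2*x^2) + 1/(2*x^2) = 1/x^2 := by field_simp; ring
    rw [abs_le]
    constructor
    · have a1 : 1/(12*x) - 1/(6*(2*x+1)) ≤ 1/(2*x^2) := by
        rw [div_sub_div _ _ (by nlinarith) (by nlinarith),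
          div_le_div_iff₀ (by nlinarith) (by nlinarith)]
        nlinarith
      linarith
    · have a1 : 1/(6*(2*x-1)) - 1/(12*x) ≤ 1/(2*x^2) := by
        rw [div_sub_div _ _ (by nlinarith) (by nlinarith),
          div_le_div_iff₀ (by nlinarith) (by nlinarith)]
        nlinarith
      linarith
  set m := muF x with hm
  have h1x : 1/x^2 ≤ 1/2 * (1/x) := by
    rw [one_div_mul_one_div, div_le_div_iff₀ hx2 (by linarith)]; nlinarith
  have h2x : 1/(12*x) = 1/12 * (1/x) := (one_div_mul_one_div 12 x).symm
  have hxu : 1/x ≤ 1/2 := by rw [div_le_div_iff₀ hx0 (by norm_num)]; linarith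
  have hxup : (0:ℝ) < 1/x := by positivity
  have hmabs : |m| ≤ 1/x := by
    have := abs_sub_abs_le_abs_sub m (1/(12*x))
    have habs12 : |1/(12*x)| = 1/(12*x) := abs_of_pos (by positivity)
    calc |m| ≤ |m - 1/(12*x)| + |1/(12*x)| := by
          have := abs_sub m (1/(12*x)); linarith [abs_add_le (m - 1/(12*x)) (1/(12*x)),
            abs_sub_abs_le_abs_sub m (1/(12*x))]
      _ ≤ 1/x^2 + 1/(12*x) := by rw [habs12]; linarith
      _ ≤ 1/x := by rw [h2x]; linarith
  have hm1 : |m| ≤ 1 := hmabs.trans (by linarith)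
  have hexp : |Real.exp m - 1 - m| ≤ m^2 := Real.abs_exp_sub_one_sub_id_le hm1
  have hmsq : m^2 ≤ 1/x^2 := by
    have : m^2 = |m|^2 := (sq_abs m).symm
    rw [this]
    calc |m|^2 ≤ (1/x)^2 := by nlinarith [abs_nonneg m]
      _ = 1/x^2 := by rw [div_pow, one_pow]
  have hGe : Gammastar x = Real.exp m := gammastar_eq hx0
  have hx2' : (0:ℝ) < 1/x^2 := by positivity
  have hfinal : |Gammastar x - 1 - 1/(12*x)| ≤ 3 * (1/x^2) := by
    rw [hGe]
    calc |Real.exp m - 1 - 1/(12*x)|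
        = |(Real.exp m - 1 - m) + (m - 1/(12*x))| := by congr 1; ring
      _ ≤ |Real.exp m - 1 - m| + |m - 1/(12*x)| := abs_add_le _ _
      _ ≤ m^2 + 1/x^2 := add_le_add hexp key
      _ ≤ 3 * (1/x^2) := by linarith
  rw [Real.norm_eq_abs, Real.norm_eq_abs, abs_of_pos (by positivity : (0:ℝ) < 1/x^2)]
  exact hfinal
end

section
/- For all a with 0 < a < 1 and all x > 0, the strict inequality γ(a,x) > 1 − e^{−x} holds; equivalently, P(a,x) > (1 − e^{−x})/Γ(a). -/
open MeasureTheory Real Set Filter Asymptotics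

lemma aux_exp_int : IntegrableOn (fun t : ℝ => Real.exp (-t)) (Ioi 0) := by
  simpa using exp_neg_integrableOn_Ioi 0 (zero_lt_one)

lemma aux_pow_int {a : ℝ} (ha : 0 < a) :
    IntegrableOn (fun t : ℝ => t ^ (a - 1) * Real.exp (-t)) (Ioi 0) := by
  have := Real.GammaIntegral_convergent ha
  refine this.congr_fun (fun t _ => mul_comm _ _) measurableSet_Ioi

lemma aux_g_int {a : ℝ} (ha : 0 < a) :
    IntegrableOn (fun t : ℝ => (t ^ (a - 1) - 1) * Real.exp (-t)) (Ioi 0) := by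
  have h : IntegrableOn (fun t : ℝ => t ^ (a - 1) * Real.exp (-t) - Real.exp (-t)) (Ioi 0) :=
    (aux_pow_int ha).sub aux_exp_int
  refine h.congr_fun (fun t _ => by ring) measurableSet_Ioi

lemma aux_t_exp_int : IntegrableOn (fun t : ℝ => (t - 1) * Real.exp (-t)) (Ioi 0) := by
  have h1 : IntegrableOn (fun t : ℝ => t ^ ((2:ℝ) - 1) * Real.exp (-t)) (Ioi 0) :=
    aux_pow_int (by norm_num)
  have h1' : IntegrableOn (fun t : ℝ => t * Real.exp (-t)) (Ioi 0) := by
    refine h1.congr_fun (fun t ht => ?_) measurableSet_Ioi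
    norm_num
  have h : IntegrableOn (fun t : ℝ => t * Real.exp (-t) - Real.exp (-t)) (Ioi 0) :=
    h1'.sub aux_exp_int
  refine h.congr_fun (fun t _ => by ring) measurableSet_Ioi

/-- `∫_1^∞ (t-1) e^{-t} dt = e^{-1}`. -/
lemma aux_integral_t_exp : ∫ t in Ioi (1:ℝ), (t - 1) * Real.exp (-t) = Real.exp (-1) := by
  have hderiv : ∀ t ∈ Ici (1:ℝ), HasDerivAt (fun t : ℝ => -t * Real.exp (-t))
      ((t - 1) * Real.exp (-t)) t := by
    intro t _
    have h1 : HasDerivAt (fun t : ℝ => Real.exp (-t)) (-Real.exp (-t)) t := by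
      have h := ((Real.hasDerivAt_exp (-t)).comp t (hasDerivAt_neg t))
      simp only [mul_neg, mul_one] at h
      exact h
    have := ((hasDerivAt_id t).neg).mul h1
    have h2 : (t - 1) * Real.exp (-t) = -1 * Real.exp (-t) + (-id) t * -Real.exp (-t) := by
      simp only [Pi.neg_apply, id]
      ring
    rw [h2]
    exact this
  have hint : IntegrableOn (fun t : ℝ => (t - 1) * Real.exp (-t)) (Ioi 1) :=
    aux_t_exp_int.mono_set (fun t ht => mem_Ioi.2 (lt_trans zero_lt_one (mem_Ioi.1 ht)))
  have htend : Tendsto (fun t : ℝ => -t * Real.exp (-t)) atTop (nhds 0) := by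
    have := (Real.tendsto_pow_mul_exp_neg_atTop_nhds_zero 1).neg
    simpa using this
  have := integral_Ioi_of_hasDerivAt_of_tendsto' hderiv hint htend
  rw [this]
  norm_num

/-- On `Ioi 1`, `-(1-a)*(t-1)*exp(-t) ≤ (t^(a-1)-1)*exp(-t)`. -/
lemma aux_pointwise_tail {a : ℝ} (ha : 0 < a) (ha1 : a < 1) {t : ℝ} (ht : 1 ≤ t) :
    -((1 - a) * ((t - 1) * Real.exp (-t))) ≤ (t ^ (a - 1) - 1) * Real.exp (-t) := by
  have htpos : 0 < t := lt_of_lt_of_le zero_lt_one ht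
  have hlog : Real.log t ≤ t - 1 := by
    have := Real.log_le_sub_one_of_pos htpos
    linarith
  have hlognn : 0 ≤ Real.log t := Real.log_nonneg ht
  have hrpow : t ^ (a - 1) = Real.exp ((a - 1) * Real.log t) := by
    rw [Real.rpow_def_of_pos htpos, mul_comm]
  have hexp : 1 + (a - 1) * Real.log t ≤ Real.exp ((a - 1) * Real.log t) := by
    have := Real.add_one_le_exp ((a - 1) * Real.log t)
    linarith
  have key : 1 - (1 - a) * (t - 1) ≤ t ^ (a - 1) := by
    rw [hrpow]
    have h1 : (1 - a) * Real.log t ≤ (1 - a) * (t - 1) :=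
      mul_le_mul_of_nonneg_left hlog (by linarith)
    nlinarith
  have hexp2 : 0 ≤ Real.exp (-t) := (Real.exp_pos _).le
  nlinarith [key, hexp2]

/-- `Γ(a) - 1 = ∫_0^∞ (t^(a-1)-1) e^{-t}`. -/
lemma aux_integral_g {a : ℝ} (ha : 0 < a) :
    ∫ t in Ioi (0:ℝ), (t ^ (a - 1) - 1) * Real.exp (-t) = Real.Gamma a - 1 := by
  have h := integral_sub (aux_pow_int ha) aux_exp_int
  have heq : ∀ t : ℝ, (t ^ (a - 1) - 1) * Real.exp (-t)
      = t ^ (a - 1) * Real.exp (-t) - Real.exp (-t) := fun t => by ring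
  simp_rw [heq]
  rw [h, integral_exp_neg_Ioi_zero, Real.Gamma_eq_integral ha]
  congr 1
  exact setIntegral_congr_fun measurableSet_Ioi (fun t _ => mul_comm _ _)

lemma aux_gamma_gt_one {a : ℝ} (ha : 0 < a) (ha1 : a < 1) : 1 < Real.Gamma a := by
  set g : ℝ → ℝ := fun t => (t ^ (a - 1) - 1) * Real.exp (-t) with hg
  have hInt : IntegrableOn g (Ioi 0) := aux_g_int ha
  -- split the integral at 1
  have hunion : Ioc (0:ℝ) 1 ∪ Ioi 1 = Ioi 0 := Ioc_union_Ioi_eq_Ioi zero_le_one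
  have hdisj : Disjoint (Ioc (0:ℝ) 1) (Ioi 1) := Ioc_disjoint_Ioi le_rfl
  have hsplit : ∫ t in Ioi (0:ℝ), g t
      = (∫ t in Ioc (0:ℝ) 1, g t) + ∫ t in Ioi (1:ℝ), g t := by
    rw [← hunion, setIntegral_union hdisj measurableSet_Ioi
      (hInt.mono_set (by rw [← hunion]; exact subset_union_left))
      (hInt.mono_set (by rw [← hunion]; exact subset_union_right))]
  -- bound on (0,1]
  have hrpow_int : IntegrableOn (fun t : ℝ => t ^ (a - 1)) (Ioc (0:ℝ) 1) := by
    have := intervalIntegral.intervalIntegrable_rpow' (a := 0) (b := 1)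
      (show (-1:ℝ) < a - 1 by linarith)
    rwa [intervalIntegrable_iff_integrableOn_Ioc_of_le zero_le_one] at this
  have hLint : IntegrableOn (fun t : ℝ => (t ^ (a - 1) - 1) * Real.exp (-1)) (Ioc (0:ℝ) 1) :=
    ((hrpow_int.sub (integrableOn_const measure_Ioc_lt_top.ne)).mul_const _)
  have hbound1 : (1 / a - 1) * Real.exp (-1) ≤ ∫ t in Ioc (0:ℝ) 1, g t := by
    have hmono : (∫ t in Ioc (0:ℝ) 1, (t ^ (a - 1) - 1) * Real.exp (-1))
        ≤ ∫ t in Ioc (0:ℝ) 1, g t := by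
      refine setIntegral_mono_on hLint (hInt.mono_set Ioc_subset_Ioi_self)
        measurableSet_Ioc (fun t ht => ?_)
      have ht1 : 0 < t := ht.1
      have hone_le : 1 ≤ t ^ (a - 1) :=
        Real.one_le_rpow_of_pos_of_le_one_of_nonpos ht1 ht.2 (by linarith)
      have hexp : Real.exp (-1) ≤ Real.exp (-t) :=
        Real.exp_le_exp.2 (by linarith [ht.2])
      exact mul_le_mul_of_nonneg_left hexp (by linarith) |>.trans_eq rfl
    have hval : (∫ t in Ioc (0:ℝ) 1, (t ^ (a - 1) - 1) * Real.exp (-1))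
        = (1 / a - 1) * Real.exp (-1) := by
      rw [integral_mul_const]
      congr 1
      rw [← intervalIntegral.integral_of_le zero_le_one]
      rw [intervalIntegral.integral_sub
        (intervalIntegral.intervalIntegrable_rpow' (by linarith)) intervalIntegrable_const]
      rw [integral_rpow (Or.inl (by linarith : (-1:ℝ) < a - 1))]
      simp [Real.zero_rpow (by linarith : a - 1 + 1 ≠ 0), Real.zero_rpow ha.ne']
    linarith [hmono, hval.symm.le, hval.le]
  -- bound on (1,∞)
  have hbound2 : -((1 - a) * Real.exp (-1)) ≤ ∫ t in Ioi (1:ℝ), g t := by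
    have hmono : (∫ t in Ioi (1:ℝ), -((1 - a) * ((t - 1) * Real.exp (-t))))
        ≤ ∫ t in Ioi (1:ℝ), g t := by
      refine setIntegral_mono_on ?_ (hInt.mono_set (fun t ht => mem_Ioi.2 (lt_trans zero_lt_one (mem_Ioi.1 ht))))
        measurableSet_Ioi (fun t ht => aux_pointwise_tail ha ha1 (le_of_lt ht))
      exact (((aux_t_exp_int.mono_set (fun t ht => mem_Ioi.2 (lt_trans zero_lt_one (mem_Ioi.1 ht)))).const_mul
        (1 - a)).neg)
    have hval : (∫ t in Ioi (1:ℝ), -((1 - a) * ((t - 1) * Real.exp (-t))))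
        = -((1 - a) * Real.exp (-1)) := by
      rw [integral_neg, integral_const_mul, aux_integral_t_exp]
    linarith [hmono, hval.le]
  have htotal := aux_integral_g ha
  have hfin : (1 / a - 1) * Real.exp (-1) - (1 - a) * Real.exp (-1) > 0 := by
    have he : 0 < Real.exp (-1) := Real.exp_pos _
    have : 1 / a - 1 - (1 - a) = (1 - a) ^ 2 / a := by field_simp
    nlinarith [sq_nonneg (1 - a), div_pos (by nlinarith : (0:ℝ) < (1 - a)^2) ha]
  have : (1 / a - 1) * Real.exp (-1) - (1 - a) * Real.exp (-1) ≤ Real.Gamma a - 1 := by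
    rw [← htotal, hsplit]
    linarith [hbound1, hbound2]
  linarith

theorem stmt9 (a x : ℝ) (ha : 0 < a) (ha1 : a < 1) (hx : 0 < x) :
    1 - Real.exp (-x) < lowGamma a x ∧ (1 - Real.exp (-x)) / Real.Gamma a < Pfun a x := by
  set g : ℝ → ℝ := fun t => (t ^ (a - 1) - 1) * Real.exp (-t) with hg
  have hInt : IntegrableOn g (Ioi 0) := aux_g_int ha
  have hIntIoc : IntegrableOn g (Ioc 0 x) := hInt.mono_set Ioc_subset_Ioi_self
  have hIi : IntervalIntegrable g volume 0 x := by
    rwa [intervalIntegrable_iff_integrableOn_Ioc_of_le hx.le]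
  have hIpow : IntervalIntegrable (fun t : ℝ => t ^ (a - 1) * Real.exp (-t)) volume 0 x := by
    rw [intervalIntegrable_iff_integrableOn_Ioc_of_le hx.le]
    exact (aux_pow_int ha).mono_set Ioc_subset_Ioi_self
  have hIexp : IntervalIntegrable (fun t : ℝ => Real.exp (-t)) volume 0 x := by
    rw [intervalIntegrable_iff_integrableOn_Ioc_of_le hx.le]
    exact aux_exp_int.mono_set Ioc_subset_Ioi_self
  have hexp_val : (∫ t in (0:ℝ)..x, Real.exp (-t)) = 1 - Real.exp (-x) := by
    have := intervalIntegral.integral_comp_neg (fun t : ℝ => Real.exp t) (a := 0) (b := x)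
    simp only [neg_zero] at this
    rw [this, integral_exp]
    simp
  have hdiff : lowGamma a x - (1 - Real.exp (-x)) = ∫ t in (0:ℝ)..x, g t := by
    rw [← hexp_val, lowGamma, ← intervalIntegral.integral_sub hIpow hIexp]
    congr 1
    funext t
    simp only [hg]
    ring
  have hpos : 0 < ∫ t in (0:ℝ)..x, g t := by
    rcases le_or_gt x 1 with hx1 | hx1
    · refine intervalIntegral.intervalIntegral_pos_of_pos_on hIi (fun t ht => ?_) hx
      have ht1 : t < 1 := lt_of_lt_of_le ht.2 hx1
      have h1 : 1 < t ^ (a - 1) := by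
        rw [Real.one_lt_rpow_iff_of_pos ht.1]
        exact Or.inr ⟨ht1, by linarith⟩
      exact mul_pos (by linarith) (Real.exp_pos _)
    · have hunion : Ioc (0:ℝ) x ∪ Ioi x = Ioi 0 := Ioc_union_Ioi_eq_Ioi hx.le
      have hsplit : ∫ t in Ioi (0:ℝ), g t
          = (∫ t in Ioc (0:ℝ) x, g t) + ∫ t in Ioi x, g t := by
        rw [← hunion, setIntegral_union (Ioc_disjoint_Ioi le_rfl) measurableSet_Ioi
          (hInt.mono_set (by rw [← hunion]; exact subset_union_left))
          (hInt.mono_set (by rw [← hunion]; exact subset_union_right))]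
      have htail : (∫ t in Ioi x, g t) ≤ 0 := by
        refine setIntegral_nonpos measurableSet_Ioi (fun t ht => ?_)
        have ht' : (1:ℝ) < t := lt_trans hx1 ht
        have h1 : t ^ (a - 1) ≤ 1 :=
          Real.rpow_le_one_of_one_le_of_nonpos (by linarith) (by linarith)
        have he := (Real.exp_pos (-t)).le
        have h2 : 0 ≤ (1 - t ^ (a - 1)) * Real.exp (-t) := mul_nonneg (by linarith) he
        show (t ^ (a - 1) - 1) * Real.exp (-t) ≤ 0
        nlinarith [h2]
      have hmain := aux_integral_g ha
      have hG := aux_gamma_gt_one ha ha1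
      rw [intervalIntegral.integral_of_le hx.le]
      have : (∫ t in Ioc (0:ℝ) x, g t) = (∫ t in Ioi (0:ℝ), g t) - ∫ t in Ioi x, g t := by
        linarith [hsplit]
      rw [this, hmain]
      linarith
  have h1 : 1 - Real.exp (-x) < lowGamma a x := by linarith [hdiff, hpos]
  refine ⟨h1, ?_⟩
  rw [Pfun]
  exact div_lt_div_of_pos_right h1 (Real.Gamma_pos_of_pos ha)
end

section
/- Let 0 < a < 1, 0 < p < 1, and let x > 0 satisfy P(a,x) = p. Then x > (p·Γ(a+1))^{1/a}; and if moreover p·Γ(a) < 1, then x < −ln(1 − p·Γ(a)). -/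
open MeasureTheory Real Set Filter Asymptotics

theorem stmt10 (a p x : ℝ) (ha : 0 < a) (ha1 : a < 1) (hp : 0 < p) (hp1 : p < 1)
    (hx : 0 < x) (hP : Pfun a x = p) :
    (p * Real.Gamma (a + 1)) ^ (1 / a) < x ∧
    (p * Real.Gamma a < 1 → x < -Real.log (1 - p * Real.Gamma a)) := by
  have hGpos : 0 < Real.Gamma a := Real.Gamma_pos_of_pos ha
  have hlg : lowGamma a x = p * Real.Gamma a := by
    have := hP
    unfold Pfun at this
    field_simp at this
    linarith [this]
  -- integrability of the Gamma integrand
  have hGint : IntegrableOn (fun t => t ^ (a - 1) * Real.exp (-t)) (Ioi (0:ℝ)) := by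
    have h := Real.GammaIntegral_convergent ha
    exact h.congr_fun (fun t _ => mul_comm _ _) measurableSet_Ioi
  have hfint : IntervalIntegrable (fun t => t ^ (a - 1) * Real.exp (-t)) volume 0 x := by
    rw [intervalIntegrable_iff_integrableOn_Ioc_of_le hx.le]
    exact hGint.mono_set Ioc_subset_Ioi_self
  -- Part 1 : lowGamma a x < x^a / a
  have h1 : a * lowGamma a x < x ^ a := by
    have hlt : (∫ t in (0:ℝ)..x, t ^ (a - 1) * Real.exp (-t)) < ∫ t in (0:ℝ)..x, t ^ (a - 1) := by
      apply intervalIntegral.integral_lt_integral_of_ae_le_of_measure_setOf_lt_ne_zero hx.le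
        hfint (intervalIntegral.intervalIntegrable_rpow' (by linarith))
      · filter_upwards [ae_restrict_mem measurableSet_Ioc] with t ht
        have h0 : (0:ℝ) < t := ht.1
        have : Real.exp (-t) ≤ 1 := Real.exp_le_one_iff.mpr (by linarith)
        nlinarith [Real.rpow_pos_of_pos h0 (a - 1)]
      · have hsub : Ioc (0:ℝ) x ⊆ {t : ℝ | t ^ (a - 1) * Real.exp (-t) < t ^ (a - 1)} := by
          intro t ht
          have h0 : (0:ℝ) < t := ht.1
          have he : Real.exp (-t) < 1 := Real.exp_lt_one_iff.mpr (by linarith)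
          have := Real.rpow_pos_of_pos h0 (a - 1)
          simp only [mem_setOf_eq]
          nlinarith
        rw [Measure.restrict_apply' measurableSet_Ioc,
          Set.inter_eq_self_of_subset_right hsub]
        simp [Real.volume_Ioc, hx.le, hx.ne']
        exact hx
    have hint : (∫ t in (0:ℝ)..x, t ^ (a - 1)) = x ^ a / a := by
      rw [integral_rpow (Or.inl (by linarith))]
      rw [Real.zero_rpow (by linarith)]
      ring_nf
    rw [hint] at hlt
    have := (mul_lt_mul_iff_right₀ ha).mpr hlt
    calc a * lowGamma a x < a * (x ^ a / a) := by exact this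
    _ = x ^ a := by field_simp
  constructor
  · -- first conclusion
    have hq : p * Real.Gamma (a + 1) = a * lowGamma a x := by
      rw [Real.Gamma_add_one ha.ne', hlg]; ring
    have hpos : 0 < p * Real.Gamma (a + 1) := by
      positivity
    rw [hq] at hpos ⊢
    have := Real.rpow_lt_rpow hpos.le h1 (by positivity : (0:ℝ) < 1/a)
    calc (a * lowGamma a x) ^ (1/a) < (x ^ a) ^ (1/a) := this
    _ = x := by rw [one_div, Real.rpow_rpow_inv hx.le ha.ne']
  · -- second conclusion
    intro hq1
    -- key : 1 - exp(-x) < lowGamma a x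
    have key : 1 - Real.exp (-x) < lowGamma a x := by
      -- Gamma a ≥ 1 by convexity
      have hG1 : 1 ≤ Real.Gamma a := by
        have hc := Real.convexOn_Gamma
        set t : ℝ := 1 / (2 - a) with htdef
        have h2a : (0:ℝ) < 2 - a := by linarith
        have ht0 : 0 < t := by positivity
        have ht1 : t < 1 := by rw [htdef]; rw [div_lt_one h2a]; linarith
        have hcomb := hc.2 (mem_Ioi.mpr ha) (mem_Ioi.mpr (by norm_num : (0:ℝ) < 2))
          ht0.le (by linarith : (0:ℝ) ≤ 1 - t) (by ring)
        have hca : t * a + (1 - t) * 2 = 1 := by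
          rw [htdef]; field_simp; ring
        simp only [smul_eq_mul, hca] at hcomb
        rw [Real.Gamma_one, Real.Gamma_two] at hcomb
        nlinarith
      -- split Gamma integral
      have hIoc : lowGamma a x = ∫ t in Ioc (0:ℝ) x, t ^ (a - 1) * Real.exp (-t) := by
        rw [lowGamma, intervalIntegral.integral_of_le hx.le]
      have hsplit : Real.Gamma a = lowGamma a x + ∫ t in Ioi x, t ^ (a - 1) * Real.exp (-t) := by
        rw [Real.Gamma_eq_integral ha]
        have : (∫ t in Ioi (0:ℝ), Real.exp (-t) * t ^ (a - 1))
            = ∫ t in Ioi (0:ℝ), t ^ (a - 1) * Real.exp (-t) :=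
          setIntegral_congr_fun measurableSet_Ioi (fun t _ => mul_comm _ _)
        rw [this, ← Set.Ioc_union_Ioi_eq_Ioi hx.le,
          setIntegral_union (Set.Ioc_disjoint_Ioi le_rfl) measurableSet_Ioi
            (hGint.mono_set Ioc_subset_Ioi_self)
            (hGint.mono_set (Ioi_subset_Ioi hx.le)), hIoc]
      rcases le_or_gt x 1 with hx1 | hx1
      · -- x ≤ 1 : compare on (0,x)
        have hexp : (1:ℝ) - Real.exp (-x) = ∫ t in (0:ℝ)..x, Real.exp (-t) := by
          rw [intervalIntegral.integral_comp_neg (fun t => Real.exp t)]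
          rw [integral_exp]
          simp
        rw [hexp, lowGamma]
        apply intervalIntegral.integral_lt_integral_of_ae_le_of_measure_setOf_lt_ne_zero hx.le
          ((by fun_prop : Continuous fun t : ℝ => Real.exp (-t)).intervalIntegrable 0 x) hfint
        · filter_upwards [ae_restrict_mem measurableSet_Ioc] with t ht
          have h0 : (0:ℝ) < t := ht.1
          have ht1 : t ≤ 1 := le_trans ht.2 hx1
          have hr : (1:ℝ) ≤ t ^ (a - 1) := by
            have := Real.rpow_le_rpow_of_exponent_ge h0 ht1 (by linarith : a - 1 ≤ 0)
            simpa using this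
          nlinarith [Real.exp_pos (-t)]
        · have hsub : Ioo (0:ℝ) (min x 1) ⊆
              {t : ℝ | Real.exp (-t) < t ^ (a - 1) * Real.exp (-t)} := by
            intro t ht
            have h0 : (0:ℝ) < t := ht.1
            have ht1 : t < 1 := lt_of_lt_of_le ht.2 (min_le_right _ _)
            have hr : (1:ℝ) < t ^ (a - 1) :=
              Real.one_lt_rpow_iff_of_pos h0 |>.mpr (Or.inr ⟨ht1, by linarith⟩)
            simp only [mem_setOf_eq]
            nlinarith [Real.exp_pos (-t)]
          have hioo : Ioo (0:ℝ) (min x 1) ⊆ Ioc 0 x := fun t ht =>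
            ⟨ht.1, le_trans ht.2.le (min_le_left _ _)⟩
          rw [Measure.restrict_apply' measurableSet_Ioc]
          intro hcontra
          have : volume (Ioo (0:ℝ) (min x 1)) = 0 := by
            refine measure_mono_null ?_ hcontra
            exact subset_inter hsub hioo
          rw [Real.volume_Ioo] at this
          have hmin : (0:ℝ) < min x 1 := lt_min hx (by norm_num)
          simp only [ENNReal.ofReal_eq_zero, tsub_zero] at this
          linarith
      · -- x > 1 : use the tail
        have htail : (∫ t in Ioi x, t ^ (a - 1) * Real.exp (-t)) < ∫ t in Ioi x, Real.exp (-t) := by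
          rw [← sub_pos, ← integral_sub ((exp_neg_integrableOn_Ioi x one_pos).congr_fun
              (fun t _ => by norm_num) measurableSet_Ioi) (hGint.mono_set (Ioi_subset_Ioi hx.le))]
          have hnn : ∀ t ∈ Ioi x, 0 < Real.exp (-t) - t ^ (a - 1) * Real.exp (-t) := by
            intro t ht
            have h1t : (1:ℝ) < t := lt_trans hx1 ht
            have hr : t ^ (a - 1) < 1 :=
              Real.rpow_lt_one_of_one_lt_of_neg h1t (by linarith)
            nlinarith [Real.exp_pos (-t), Real.rpow_pos_of_pos (by linarith : (0:ℝ) < t) (a-1)]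
          rw [setIntegral_pos_iff_support_of_nonneg_ae]
          · have hsub : Ioi x ⊆ Function.support
                (fun t => Real.exp (-t) - t ^ (a - 1) * Real.exp (-t)) := by
              intro t ht
              exact ne_of_gt (hnn t ht)
            have : volume (Function.support
                (fun t => Real.exp (-t) - t ^ (a - 1) * Real.exp (-t)) ∩ Ioi x)
                = volume (Ioi x) := by
              rw [Set.inter_eq_self_of_subset_right hsub]
            rw [this, Real.volume_Ioi]
            simp
          · filter_upwards [ae_restrict_mem measurableSet_Ioi] with t ht
            exact (hnn t ht).le
          · exact (((exp_neg_integrableOn_Ioi x one_pos).congr_fun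
              (fun t _ => by norm_num) measurableSet_Ioi)).sub
              (hGint.mono_set (Ioi_subset_Ioi hx.le))
        rw [integral_exp_neg_Ioi] at htail
        -- lowGamma = Γ(a) - tail ≥ 1 - tail > 1 - exp(-x)
        linarith [hsplit, hG1]
    rw [hlg] at key
    have h1q : 0 < 1 - p * Real.Gamma a := by linarith
    have : 1 - p * Real.Gamma a < Real.exp (-x) := by linarith
    have hlog := Real.log_lt_log h1q this
    rw [Real.log_exp] at hlog
    linarith
end

section
/- Let 0 < a ≤ 1, 0 < p < 1, and let x* > 0 be the unique solution of P(a,x*) = p. Define the Newton iteration x_{n+1} = x_n − (P(a,x_n) − p)·Γ(a)·x_n^{1−a}·e^{x_n} (Newton's method for f(x) = P(a,x) − p, since ∂P/∂x = x^{a−1}e^{−x}/Γ(a)). If the starting value satisfies 0 < x_0 ≤ x*, then the sequence (x_n) is monotonically nondecreasing, satisfies x_n ≤ x* for all n, and converges to x*. -/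
open MeasureTheory Real Set Filter Asymptotics Topology

section aux

variable {a : ℝ} (ha : 0 < a)

lemma lg_intble (ha : 0 < a) {u v : ℝ} (hu : 0 ≤ u) (hv : 0 ≤ v) :
    IntervalIntegrable (fun t : ℝ => t ^ (a - 1) * Real.exp (-t)) volume u v := by
  have key : ∀ w z : ℝ, 0 ≤ w → w ≤ z →
      IntervalIntegrable (fun t : ℝ => t ^ (a - 1) * Real.exp (-t)) volume w z := by
    intro w z hw hwz
    rw [intervalIntegrable_iff_integrableOn_Ioc_of_le hwz]
    have := (Real.GammaIntegral_convergent ha).mono_set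
      (show Ioc w z ⊆ Ioi 0 from fun t ht => lt_of_le_of_lt hw ht.1)
    exact this.congr_fun (fun t _ => mul_comm _ _) measurableSet_Ioc
  rcases le_total u v with h | h
  · exact key u v hu h
  · exact (key v u hv h).symm

lemma lg_deriv (ha : 0 < a) {u : ℝ} (hu : 0 < u) :
    HasDerivAt (lowGamma a) (u ^ (a - 1) * Real.exp (-u)) u := by
  apply intervalIntegral.integral_hasDerivAt_right (lg_intble ha le_rfl hu.le)
  · refine ⟨Ioi 0, Ioi_mem_nhds hu, ?_⟩
    exact ((measurable_id.pow_const _).mul (measurable_neg.exp)).aestronglyMeasurable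
  · exact ((Real.continuousAt_rpow_const _ _ (Or.inl hu.ne')).mul
      ((continuous_exp.comp continuous_neg).continuousAt))

lemma lg_sub (ha : 0 < a) {u v : ℝ} (hu : 0 ≤ u) (hv : 0 ≤ v) :
    lowGamma a v - lowGamma a u = ∫ t in u..v, t ^ (a - 1) * Real.exp (-t) := by
  simp only [lowGamma]
  exact intervalIntegral.integral_interval_sub_left
    (lg_intble ha le_rfl hv) (lg_intble ha le_rfl hu)

lemma lg_strict (ha : 0 < a) {u v : ℝ} (hu : 0 ≤ u) (huv : u < v) :
    lowGamma a u < lowGamma a v := by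
  have h : 0 < ∫ t in u..v, t ^ (a - 1) * Real.exp (-t) := by
    apply intervalIntegral.intervalIntegral_pos_of_pos_on
      (lg_intble ha hu (hu.trans huv.le))
    · intro t ht
      exact mul_pos (Real.rpow_pos_of_pos (lt_of_le_of_lt hu ht.1) _) (Real.exp_pos _)
    · exact huv
  linarith [lg_sub ha hu (hu.trans huv.le) (v := v)]

/-- Key concavity bound. -/
lemma lg_bound (ha : 0 < a) (ha1 : a ≤ 1) {u v : ℝ} (hu : 0 < u) (huv : u ≤ v) :
    lowGamma a v - lowGamma a u ≤ u ^ (a - 1) * Real.exp (-u) * (v - u) := by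
  rw [lg_sub ha hu.le (hu.le.trans huv)]
  have h1 : (∫ t in u..v, t ^ (a - 1) * Real.exp (-t)) ≤
      ∫ _t in u..v, u ^ (a - 1) * Real.exp (-u) := by
    apply intervalIntegral.integral_mono_on huv (lg_intble ha hu.le (hu.le.trans huv))
      intervalIntegrable_const
    intro t ht
    have htpos : 0 < t := lt_of_lt_of_le hu ht.1
    apply mul_le_mul
    · exact Real.rpow_le_rpow_of_nonpos hu ht.1 (by linarith)
    · exact Real.exp_le_exp.2 (by linarith [ht.1])
    · exact (Real.exp_pos _).le
    · exact (Real.rpow_pos_of_pos hu _).le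
  rw [intervalIntegral.integral_const, smul_eq_mul] at h1
  calc (∫ t in u..v, t ^ (a - 1) * Real.exp (-t))
      ≤ (v - u) * (u ^ (a - 1) * Real.exp (-u)) := h1
    _ = u ^ (a - 1) * Real.exp (-u) * (v - u) := by ring

end aux

theorem stmt13 (a p xstar : ℝ) (ha : 0 < a) (ha1 : a ≤ 1) (hp : 0 < p) (hp1 : p < 1)
    (hxs : 0 < xstar) (hPx : Pfun a xstar = p) (x : ℕ → ℝ)
    (hrec : ∀ n, x (n + 1) =
      x n - (Pfun a (x n) - p) * Real.Gamma a * x n ^ (1 - a) * Real.exp (x n))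
    (h0 : 0 < x 0) (h0' : x 0 ≤ xstar) :
    Monotone x ∧ (∀ n, x n ≤ xstar) ∧ Filter.Tendsto x Filter.atTop (𝓝 xstar) := by
  have hΓ : 0 < Real.Gamma a := Real.Gamma_pos_of_pos ha
  -- the one-step facts
  have step : ∀ u : ℝ, 0 < u → u ≤ xstar →
      u ≤ u - (Pfun a u - p) * Real.Gamma a * u ^ (1 - a) * Real.exp u ∧
      u - (Pfun a u - p) * Real.Gamma a * u ^ (1 - a) * Real.exp u ≤ xstar := by
    intro u hu hux
    have hPle : Pfun a u ≤ p := by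
      rw [← hPx, Pfun, Pfun]
      gcongr
      rcases eq_or_lt_of_le hux with h | h
      · rw [h]
      · exact (lg_strict ha hu.le h).le
    have hfac : 0 ≤ Real.Gamma a * u ^ (1 - a) * Real.exp u :=
      by positivity
    constructor
    · nlinarith [mul_nonneg (sub_nonneg.2 hPle) hfac]
    · have hbound := lg_bound ha ha1 hu hux
      have hPdiff : p - Pfun a u = (lowGamma a xstar - lowGamma a u) / Real.Gamma a := by
        rw [← hPx, Pfun, Pfun]; ring
      have key : (p - Pfun a u) * Real.Gamma a * u ^ (1 - a) * Real.exp u ≤ xstar - u := by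
        rw [hPdiff, div_mul_cancel₀ _ hΓ.ne']
        calc (lowGamma a xstar - lowGamma a u) * u ^ (1 - a) * Real.exp u
            ≤ u ^ (a - 1) * Real.exp (-u) * (xstar - u) * u ^ (1 - a) * Real.exp u := by
              apply mul_le_mul_of_nonneg_right
                (mul_le_mul_of_nonneg_right hbound (Real.rpow_pos_of_pos hu _).le)
                (Real.exp_pos _).le
          _ = (u ^ (a - 1) * u ^ (1 - a)) * (Real.exp (-u) * Real.exp u) * (xstar - u) := by
              ring
          _ = xstar - u := by
              rw [← Real.rpow_add hu, ← Real.exp_add]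
              norm_num
      linarith
  -- invariant
  have inv : ∀ n, 0 < x n ∧ x n ≤ xstar := by
    intro n
    induction n with
    | zero => exact ⟨h0, h0'⟩
    | succ n ih =>
      obtain ⟨h1, h2⟩ := step (x n) ih.1 ih.2
      rw [hrec n]
      refine ⟨lt_of_lt_of_le ih.1 h1, h2⟩
  have hmono : Monotone x := by
    apply monotone_nat_of_le_succ
    intro n
    rw [hrec n]
    exact (step (x n) (inv n).1 (inv n).2).1
  refine ⟨hmono, fun n => (inv n).2, ?_⟩
  -- convergence
  have hbdd : BddAbove (Set.range x) := ⟨xstar, by rintro _ ⟨n, rfl⟩; exact (inv n).2⟩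
  set L := ⨆ n, x n with hL
  have htend : Filter.Tendsto x Filter.atTop (𝓝 L) :=
    tendsto_atTop_ciSup hmono hbdd
  have hL0 : 0 < L := lt_of_lt_of_le h0 (le_ciSup hbdd 0)
  have hLx : L ≤ xstar := ciSup_le fun n => (inv n).2
  -- pass to the limit
  have hcontP : ContinuousAt (Pfun a) L := by
    exact ((lg_deriv ha hL0).continuousAt).div_const _
  have htend' : Filter.Tendsto (fun n => x (n + 1)) Filter.atTop (𝓝 L) :=
    htend.comp (tendsto_add_atTop_nat 1)
  have htendR : Filter.Tendsto
      (fun n => x n - (Pfun a (x n) - p) * Real.Gamma a * x n ^ (1 - a) * Real.exp (x n))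
      Filter.atTop
      (𝓝 (L - (Pfun a L - p) * Real.Gamma a * L ^ (1 - a) * Real.exp L)) := by
    apply Filter.Tendsto.sub htend
    apply Filter.Tendsto.mul ?_ (Real.continuous_exp.continuousAt.tendsto.comp htend)
    apply Filter.Tendsto.mul ?_ ?_
    · exact ((hcontP.tendsto.comp htend).sub tendsto_const_nhds).mul tendsto_const_nhds
    · exact (Real.continuousAt_rpow_const _ _ (Or.inl hL0.ne')).tendsto.comp htend
  have heq : L = L - (Pfun a L - p) * Real.Gamma a * L ^ (1 - a) * Real.exp L := by
    apply tendsto_nhds_unique htend'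
    simpa only [← hrec] using htendR
  have hzero : (Pfun a L - p) * Real.Gamma a * L ^ (1 - a) * Real.exp L = 0 := by
    linarith
  have hPL : Pfun a L = p := by
    have h1 : (0:ℝ) < Real.Gamma a * L ^ (1 - a) * Real.exp L := by positivity
    rcases mul_eq_zero.1 hzero with h | h
    · rcases mul_eq_zero.1 h with h' | h'
      · rcases mul_eq_zero.1 h' with h'' | h''
        · linarith
        · exact absurd h'' hΓ.ne'
      · exact absurd h' (Real.rpow_pos_of_pos hL0 _).ne'
    · exact absurd h (Real.exp_pos _).ne'
  -- L = xstar
  have : L = xstar := by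
    by_contra hne
    have hlt : L < xstar := lt_of_le_of_ne hLx hne
    have := lg_strict ha hL0.le hlt
    have hglg : lowGamma a L = lowGamma a xstar := by
      have h1 : lowGamma a L / Real.Gamma a = lowGamma a xstar / Real.Gamma a := by
        rw [show lowGamma a L / Real.Gamma a = Pfun a L from rfl,
          show lowGamma a xstar / Real.Gamma a = Pfun a xstar from rfl, hPL, hPx]
      field_simp at h1
      exact h1
    linarith
  rw [← this]
  exact htend
end

section
/- Fix a > 0. For p ∈ (0,1), let x(p) be the unique positive solution of P(a,x) = p and set r = (p·Γ(a+1))^{1/a}. Then as p → 0⁺ (equivalently r → 0⁺), x(p) = r + r²/(a+1) + (3a+5)r³/(2(a+1)²(a+2)) + O(r⁴). -/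
open MeasureTheory Real Set Filter Asymptotics Topology

open intervalIntegral


set_option maxHeartbeats 1000000 in
lemma binom_isBigO (c : ℝ) :
    (fun t : ℝ => (1+t)^c - (1 + c*t + c*(c-1)/2*t^2)) =O[𝓝 (0:ℝ)] fun t => t^3 := by
  have hδ : (0:ℝ) < min (1/2) (1/(2*(|c|+1))) := by positivity
  rw [isBigO_iff]
  refine ⟨8 * |c|^3 + 2 * |c| + 3*c^2 + 1, ?_⟩
  have hev : ∀ᶠ t : ℝ in 𝓝 0, |t| ≤ min (1/2) (1/(2*(|c|+1))) := by
    filter_upwards [Metric.closedBall_mem_nhds (0:ℝ) hδ] with t ht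
    simpa [Real.dist_eq] using ht
  filter_upwards [hev] with t ht
  have ht2 : |t| ≤ 1/2 := le_trans ht (min_le_left _ _)
  have htc : |t| ≤ 1/(2*(|c|+1)) := le_trans ht (min_le_right _ _)
  have habs := abs_le.1 ht2
  have h1t : (0:ℝ) < 1 + t := by linarith [habs.1]
  have hs2 : |t|^2 ≤ |t|/2 := by nlinarith [abs_nonneg t]
  have hs3 : |t|^3 ≤ |t|/4 := by nlinarith [abs_nonneg t, pow_nonneg (abs_nonneg t) 2]
  obtain ⟨L, hL⟩ : ∃ L, L = Real.log (1+t) := ⟨_, rfl⟩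
  have hlog0 : |(∑ i ∈ Finset.range 2, (-t) ^ (i + 1) / (i + 1)) + Real.log (1 - (-t))|
      ≤ |(-t)| ^ (2 + 1) / (1 - |(-t)|) := by
    apply Real.abs_log_sub_add_sum_range_le
    rw [abs_neg]; linarith
  have hlog : |L - (t - t^2/2)| ≤ 2 * |t|^3 := by
    have h2 : |L - (t - t^2/2)| ≤ |t|^3 / (1 - |t|) := by
      have hsum : (∑ i ∈ Finset.range 2, (-t) ^ (i + 1) / ((i:ℝ) + 1)) = -t + t^2/2 := by
        simp [Finset.sum_range_succ]; ring
      rw [hsum, abs_neg, sub_neg_eq_add] at hlog0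
      have heq : L - (t - t^2/2) = (-t + t^2/2) + Real.log (1 + t) := by rw [← hL]; ring
      rw [heq]; exact hlog0
    have h3 : |t|^3 / (1 - |t|) ≤ 2 * |t|^3 := by
      rw [div_le_iff₀ (by linarith)]
      nlinarith [abs_nonneg t, pow_nonneg (abs_nonneg t) 3]
    linarith
  have h4 : |t - t^2/2| ≤ |t| + |t|^2/2 := by
    calc |t - t^2/2| ≤ |t| + |t^2/2| := abs_sub _ _
      _ = |t| + |t|^2/2 := by rw [abs_div, abs_pow, sq_abs]; norm_num
  have hLb : |L| ≤ 2 * |t| := by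
    have h5 : |L| ≤ |t - t^2/2| + |L - (t - t^2/2)| := by
      calc |L| = |(t - t^2/2) + (L - (t - t^2/2))| := by ring_nf
        _ ≤ _ := abs_add_le _ _
    linarith [abs_nonneg t]
  obtain ⟨u, hu⟩ : ∃ u, u = c * L := ⟨_, rfl⟩
  have hub : |u| ≤ 2 * |c| * |t| := by
    rw [hu, abs_mul]
    nlinarith [abs_nonneg c, abs_nonneg t]
  have hu1 : |u| ≤ 1 := by
    have h6 : 2 * |c| * |t| ≤ 1 := by
      rw [le_div_iff₀ (by positivity)] at htc
      nlinarith [abs_nonneg c]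
    linarith
  have hexp0 := Real.exp_bound hu1 (n := 3) (by norm_num)
  have hexp : |Real.exp u - (1 + u + u^2/2)| ≤ |u|^3 * (4/18) := by
    have hsum : (∑ m ∈ Finset.range 3, u ^ m / (Nat.factorial m)) = 1 + u + u^2/2 := by
      simp [Finset.sum_range_succ, Nat.factorial]
    rw [hsum] at hexp0
    convert hexp0 using 2
    norm_num [Nat.factorial]
  have hrpow : (1+t)^c = Real.exp u := by
    rw [Real.rpow_def_of_pos h1t, hu, hL, mul_comm]
  have key : (1+t)^c - (1 + c*t + c*(c-1)/2*t^2)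
      = (Real.exp u - (1 + u + u^2/2)) + c*(L - (t - t^2/2)) + (u - c*t)*(u + c*t)/2 := by
    rw [hrpow, hu]; ring
  have e4 : |u - c*t| ≤ (3/2) * |c| * |t|^2 := by
    have heq : u - c*t = c*(L - (t - t^2/2)) - c*(t^2/2) := by rw [hu]; ring
    rw [heq]
    calc |c*(L - (t - t^2/2)) - c*(t^2/2)| ≤ |c*(L - (t - t^2/2))| + |c*(t^2/2)| := abs_sub _ _
      _ = |c| * |L - (t - t^2/2)| + |c| * (|t|^2/2) := by
          rw [abs_mul, abs_mul]; congr 1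
          rw [abs_div, abs_pow, sq_abs]; norm_num
      _ ≤ (3/2) * |c| * |t|^2 := by
          have h33 : |t|^3 ≤ |t|^2/2 := by nlinarith [pow_nonneg (abs_nonneg t) 2]
          have hcb := mul_le_mul_of_nonneg_left hlog (abs_nonneg c)
          have h34 := mul_le_mul_of_nonneg_left h33 (abs_nonneg c)
          linarith
  have e5 : |u + c*t| ≤ 3 * |c| * |t| := by
    calc |u + c*t| ≤ |u| + |c*t| := abs_add_le _ _
      _ ≤ 3 * |c| * |t| := by rw [abs_mul]; linarith
  have hA : |Real.exp u - (1 + u + u^2/2)| ≤ 8 * |c|^3 * |t|^3 := by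
    have h7 : |u|^3 ≤ 8 * (|c|^3 * |t|^3) := by
      calc |u|^3 ≤ (2 * |c| * |t|)^3 := by
            apply pow_le_pow_left₀ (abs_nonneg u) hub
        _ = 8 * (|c|^3 * |t|^3) := by ring
    have h8 : 0 ≤ |c|^3 * |t|^3 :=
      mul_nonneg (pow_nonneg (abs_nonneg c) 3) (pow_nonneg (abs_nonneg t) 3)
    linarith
  have hB : |c*(L - (t - t^2/2))| ≤ 2 * |c| * |t|^3 := by
    rw [abs_mul]
    have := mul_le_mul_of_nonneg_left hlog (abs_nonneg c)
    linarith
  have hC : |(u - c*t)*(u + c*t)/2| ≤ (9/4) * c^2 * |t|^3 := by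
    rw [abs_div, abs_mul]
    have h2 : |u - c*t| * |u + c*t| ≤ ((3/2) * |c| * |t|^2) * (3 * |c| * |t|) :=
      mul_le_mul e4 e5 (abs_nonneg _) (by positivity)
    have h9 : ((3/2) * |c| * |t|^2) * (3 * |c| * |t|) = (9/2) * (c^2 * |t|^3) := by
      rw [← sq_abs c]; ring
    have h11 : |(2:ℝ)| = 2 := by norm_num
    rw [h11]
    have h12 : 0 ≤ c^2 * |t|^3 := mul_nonneg (sq_nonneg c) (pow_nonneg (abs_nonneg t) 3)
    linarith
  rw [key, Real.norm_eq_abs, Real.norm_eq_abs, abs_pow]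
  have htri : |Real.exp u - (1 + u + u^2/2) + c*(L - (t - t^2/2)) + (u - c*t)*(u + c*t)/2|
      ≤ |Real.exp u - (1 + u + u^2/2)| + |c*(L - (t - t^2/2))| + |(u - c*t)*(u + c*t)/2| :=
    (abs_add_le _ _).trans (by gcongr; exact abs_add_le _ _)
  have hk3 : 0 ≤ |c|^3 * |t|^3 :=
    mul_nonneg (pow_nonneg (abs_nonneg c) 3) (pow_nonneg (abs_nonneg t) 3)
  have hk2 : 0 ≤ c^2 * |t|^3 := mul_nonneg (sq_nonneg c) (pow_nonneg (abs_nonneg t) 3)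
  have hk1 : 0 ≤ |c| * |t|^3 := mul_nonneg (abs_nonneg c) (pow_nonneg (abs_nonneg t) 3)
  have hk0 : 0 ≤ |t|^3 := pow_nonneg (abs_nonneg t) 3
  linarith [htri, hA, hB, hC]


section A
variable {a : ℝ} (ha : 0 < a)

lemma aesm_rexp_mul (x : ℝ) :
    AEStronglyMeasurable (fun t : ℝ => t ^ (a-1) * Real.exp (-t))
      (volume.restrict (Set.uIoc (0:ℝ) x)) := by
  have : Measurable (fun t : ℝ => t ^ (a-1) * Real.exp (-t)) := by fun_prop
  exact this.aestronglyMeasurable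

include ha in
lemma intInt (x : ℝ) (hx : 0 ≤ x) :
    IntervalIntegrable (fun t : ℝ => t ^ (a-1) * Real.exp (-t)) volume 0 x := by
  apply IntervalIntegrable.mono_fun (intervalIntegrable_rpow' (by linarith : (-1:ℝ) < a - 1))
    (aesm_rexp_mul x)
  filter_upwards [ae_restrict_mem measurableSet_uIoc] with t ht
  rw [Set.uIoc_of_le hx] at ht
  have ht0 : 0 < t := ht.1
  rw [Real.norm_eq_abs, Real.norm_eq_abs, abs_mul, abs_of_pos (Real.rpow_pos_of_pos ht0 _),
    abs_of_pos (Real.exp_pos _)]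
  nth_rewrite 2 [← mul_one (t ^ (a-1))]
  gcongr
  exact Real.exp_le_one_iff.2 (by linarith [ht.1.le])

include ha in
lemma lowGamma_pos {x : ℝ} (hx : 0 < x) : 0 < lowGamma a x := by
  apply intervalIntegral_pos_of_pos_on (intInt ha x hx.le) _ hx
  intro t ht
  exact mul_pos (Real.rpow_pos_of_pos ht.1 _) (Real.exp_pos _)

include ha in
lemma lowGamma_mono {u y : ℝ} (hu : 0 < u) (huy : u ≤ y) : lowGamma a u ≤ lowGamma a y := by
  have hcont : ContinuousOn (fun t : ℝ => t ^ (a-1) * Real.exp (-t)) (Set.uIcc u y) := by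
    apply ContinuousOn.mul
    · apply ContinuousOn.rpow_const continuousOn_id
      intro t ht
      rw [Set.uIcc_of_le huy] at ht
      exact Or.inl (by linarith [ht.1] : t ≠ 0)
    · exact (Real.continuous_exp.comp continuous_neg).continuousOn
  have hint : IntervalIntegrable (fun t : ℝ => t ^ (a-1) * Real.exp (-t)) volume u y :=
    hcont.intervalIntegrable
  have hadd := integral_add_adjacent_intervals (intInt ha u hu.le) hint
  have hpos : 0 ≤ ∫ t in u..y, t ^ (a-1) * Real.exp (-t) := by
    apply intervalIntegral.integral_nonneg huy
    intro t ht
    exact le_of_lt (mul_pos (Real.rpow_pos_of_pos (lt_of_lt_of_le hu ht.1) _) (Real.exp_pos _))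
  unfold lowGamma
  linarith [hadd]

include ha in
lemma rpow_integral (k : ℕ) (x : ℝ) (hx : 0 < x) :
    ∫ t in (0:ℝ)..x, t ^ (a-1) * t ^ k = x ^ (a+k) / (a+k) := by
  have hcongr : ∀ t ∈ Set.uIcc (0:ℝ) x, t ^ (a-1) * t ^ k = t ^ (a - 1 + k) := by
    intro t ht
    rw [Set.uIcc_of_le hx.le] at ht
    rcases eq_or_lt_of_le ht.1 with h | h
    · subst h
      rcases Nat.eq_zero_or_pos k with hk | hk
      · subst hk; norm_num
      · rw [Real.zero_rpow (show a - 1 + (k:ℝ) ≠ 0 by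
          have : (1:ℝ) ≤ (k:ℝ) := by exact_mod_cast hk
          linarith), zero_pow (by omega : k ≠ 0), mul_zero]
    · rw [Real.rpow_add h, Real.rpow_natCast]
  rw [intervalIntegral.integral_congr hcongr, integral_rpow (Or.inl (by
    push_cast
    have : (0:ℝ) ≤ (k:ℝ) := Nat.cast_nonneg k
    linarith))]
  have he : a - 1 + (k:ℝ) + 1 = a + k := by ring
  rw [he, Real.zero_rpow (show a + (k:ℝ) ≠ 0 by
    have : (0:ℝ) ≤ (k:ℝ) := Nat.cast_nonneg k
    positivity)]
  ring
end A

section B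
variable {a : ℝ}

lemma intInt_k (ha : 0 < a) (k : ℕ) (x : ℝ) (hx : 0 ≤ x) :
    IntervalIntegrable (fun t : ℝ => t ^ (a-1) * t ^ k) volume 0 x := by
  apply IntervalIntegrable.mono_fun
    (intervalIntegrable_rpow' (by
      have : (0:ℝ) ≤ (k:ℝ) := Nat.cast_nonneg k
      linarith : (-1:ℝ) < a - 1 + k))
    (Measurable.aestronglyMeasurable (by fun_prop))
  filter_upwards [ae_restrict_mem measurableSet_uIoc] with t ht
  rw [Set.uIoc_of_le hx] at ht
  rw [Real.rpow_add ht.1, Real.rpow_natCast]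

lemma lowGamma_est (ha : 0 < a) {x : ℝ} (hx : 0 < x) (hx1 : x ≤ 1) :
    |lowGamma a x - (x^a/a - x^(a+1)/(a+1) + x^(a+2)/(2*(a+2)))| ≤ x^(a+3) := by
  have hfun : (fun t : ℝ => t ^ (a-1) * (1 - t + t^2/2))
      = fun t : ℝ => t ^ (a-1) * t ^ (0:ℕ) - t ^ (a-1) * t ^ (1:ℕ)
        + (1/2) * (t ^ (a-1) * t ^ (2:ℕ)) := by
    funext t; ring
  have hcomb : IntervalIntegrable (fun t : ℝ => t ^ (a-1) * (1 - t + t^2/2)) volume 0 x := by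
    rw [hfun]
    exact ((intInt_k ha 0 x hx.le).sub (intInt_k ha 1 x hx.le)).add
      ((intInt_k ha 2 x hx.le).const_mul _)
  have hpoly : ∫ t in (0:ℝ)..x, t ^ (a-1) * (1 - t + t^2/2)
      = x^a/a - x^(a+1)/(a+1) + x^(a+2)/(2*(a+2)) := by
    rw [hfun, intervalIntegral.integral_add
        ((intInt_k ha 0 x hx.le).sub (intInt_k ha 1 x hx.le))
        ((intInt_k ha 2 x hx.le).const_mul _),
      intervalIntegral.integral_sub (intInt_k ha 0 x hx.le) (intInt_k ha 1 x hx.le),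
      intervalIntegral.integral_const_mul,
      rpow_integral ha 0 x hx, rpow_integral ha 1 x hx, rpow_integral ha 2 x hx]
    push_cast
    rw [add_zero]
    have h1 : a + 1 ≠ 0 := by positivity
    have h2 : a + 2 ≠ 0 := by positivity
    have h0 : a ≠ 0 := ne_of_gt ha
    field_simp
    try ring
  have hdiff : lowGamma a x - (x^a/a - x^(a+1)/(a+1) + x^(a+2)/(2*(a+2)))
      = ∫ t in (0:ℝ)..x, (t ^ (a-1) * Real.exp (-t) - t ^ (a-1) * (1 - t + t^2/2)) := by
    rw [intervalIntegral.integral_sub (intInt ha x hx.le) hcomb, hpoly]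
    rfl
  rw [hdiff]
  have hbnd : ‖∫ t in (0:ℝ)..x, (t ^ (a-1) * Real.exp (-t) - t ^ (a-1) * (1 - t + t^2/2))‖
      ≤ |∫ t in (0:ℝ)..x, (2/9) * (t ^ (a-1) * t ^ (3:ℕ))| := by
    apply intervalIntegral.norm_integral_le_abs_of_norm_le _ ((intInt_k ha 3 x hx.le).const_mul _)
    filter_upwards [ae_restrict_mem measurableSet_uIoc] with t ht
    rw [Set.uIoc_of_le hx.le] at ht
    have ht0 : 0 < t := ht.1
    have ht1 : t ≤ 1 := le_trans ht.2 hx1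
    have hexp : |Real.exp (-t) - (1 - t + t^2/2)| ≤ (2/9) * t^3 := by
      have h := Real.exp_bound (x := -t) (by rw [abs_neg, abs_of_pos ht0]; exact ht1)
        (n := 3) (by norm_num)
      have hsum : (∑ m ∈ Finset.range 3, (-t) ^ m / (Nat.factorial m)) = 1 - t + t^2/2 := by
        simp [Finset.sum_range_succ, Nat.factorial]
        ring
      rw [hsum] at h
      calc |Real.exp (-t) - (1 - t + t^2/2)| ≤ |(-t)|^3 * (Nat.succ 3 / (Nat.factorial 3 * 3)) := h
        _ = (2/9) * t^3 := by
            rw [abs_neg, abs_of_pos ht0]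
            norm_num [Nat.factorial]
            ring
    have heq : t ^ (a-1) * Real.exp (-t) - t ^ (a-1) * (1 - t + t^2/2)
        = t ^ (a-1) * (Real.exp (-t) - (1 - t + t^2/2)) := by ring
    rw [heq, Real.norm_eq_abs, abs_mul, abs_of_pos (Real.rpow_pos_of_pos ht0 _)]
    calc t ^ (a-1) * |Real.exp (-t) - (1 - t + t^2/2)| ≤ t ^ (a-1) * ((2/9) * t^3) := by
          gcongr
      _ = (2/9) * (t ^ (a-1) * t ^ (3:ℕ)) := by push_cast; ring
  rw [Real.norm_eq_abs] at hbnd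
  refine hbnd.trans ?_
  rw [intervalIntegral.integral_const_mul, rpow_integral ha 3 x hx]
  have hx3 : (0:ℝ) < x ^ (a + (3:ℕ)) := Real.rpow_pos_of_pos hx _
  rw [abs_of_pos (by positivity)]
  push_cast at hx3 ⊢
  calc (2:ℝ)/9 * (x ^ (a+3) / (a+3)) ≤ 2/9 * (x ^ (a+3) / 3) := by
        gcongr
        linarith
    _ ≤ x ^ (a+3) := by linarith
end B

section C
variable {a : ℝ}

noncomputable def vF (a x : ℝ) : ℝ := a * lowGamma a x / x ^ a - 1
noncomputable def wF (a x : ℝ) : ℝ := (1 + vF a x) ^ ((1:ℝ)/a) - 1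
noncomputable def psiF (a x : ℝ) : ℝ := (a * lowGamma a x) ^ ((1:ℝ)/a)
noncomputable def P2 (a x : ℝ) : ℝ := -(a/(a+1))*x + a/(2*(a+2))*x^2
noncomputable def W1 (a : ℝ) : ℝ := -1/(a+1)
noncomputable def W2 (a : ℝ) : ℝ := 1/(2*(a+2)) + (1-a)/(2*(a+1)^2)
noncomputable def AF (a x : ℝ) : ℝ := wF a x - (W1 a * x + W2 a * x^2)

lemma mem01 : ∀ᶠ x : ℝ in 𝓝[>](0:ℝ), 0 < x ∧ x ≤ 1 := by
  filter_upwards [Ioc_mem_nhdsGT_of_mem (show (0:ℝ) ∈ Set.Ico (0:ℝ) 1 by norm_num)]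
    with x hx using ⟨hx.1, hx.2⟩

lemma pow_O_pow {m n : ℕ} (h : n ≤ m) :
    (fun x : ℝ => x^m) =O[𝓝[>](0:ℝ)] (fun x : ℝ => x^n) := by
  rw [isBigO_iff]
  refine ⟨1, ?_⟩
  filter_upwards [mem01] with x hx
  rw [one_mul, Real.norm_eq_abs, Real.norm_eq_abs, abs_pow, abs_pow]
  exact pow_le_pow_of_le_one (abs_nonneg x) (by rw [abs_of_pos hx.1]; exact hx.2) h

lemma lin_O1 (c1 c2 : ℝ) : (fun x : ℝ => c1*x + c2*x^2) =O[𝓝[>](0:ℝ)] (fun x : ℝ => x^1) := by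
  have h1 : (fun x : ℝ => c1*x) =O[𝓝[>](0:ℝ)] (fun x : ℝ => x^1) :=
    ((isBigO_refl (fun x : ℝ => x^1) _).const_mul_left c1).congr_left (fun x => by ring)
  have h2 : (fun x : ℝ => c2*x^2) =O[𝓝[>](0:ℝ)] (fun x : ℝ => x^1) :=
    ((pow_O_pow (by norm_num : 1 ≤ 2)).const_mul_left c2)
  exact h1.add h2

lemma vF_est (ha : 0 < a) {x : ℝ} (hx : 0 < x) (hx1 : x ≤ 1) :
    |vF a x - P2 a x| ≤ a * x^3 := by
  have hxa : (0:ℝ) < x ^ a := Real.rpow_pos_of_pos hx a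
  have e1 : x^(a+1) = x^a * x := by rw [Real.rpow_add hx, Real.rpow_one]
  have e2 : x^(a+2) = x^a * x^2 := by
    rw [show a+2 = a+1+1 by ring, Real.rpow_add hx, Real.rpow_one, e1]; ring
  have e3 : x^(a+3) = x^a * x^3 := by
    rw [show a+3 = a+2+1 by ring, Real.rpow_add hx, Real.rpow_one, e2]; ring
  have h1 : a + 1 ≠ 0 := by positivity
  have h2 : a + 2 ≠ 0 := by positivity
  have hkey : vF a x - P2 a x
      = (a/x^a) * (lowGamma a x - (x^a/a - x^(a+1)/(a+1) + x^(a+2)/(2*(a+2)))) := by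
    unfold vF P2
    rw [e1, e2]
    field_simp
    ring
  rw [hkey, abs_mul, abs_of_pos (by positivity : (0:ℝ) < a/x^a)]
  calc a/x^a * |lowGamma a x - (x^a/a - x^(a+1)/(a+1) + x^(a+2)/(2*(a+2)))|
      ≤ a/x^a * x^(a+3) := by gcongr; exact lowGamma_est ha hx hx1
    _ = a * x^3 := by rw [e3]; field_simp
end C

section D
variable {a : ℝ}

lemma vF_O3 (ha : 0 < a) :
    (fun x => vF a x - P2 a x) =O[𝓝[>](0:ℝ)] (fun x : ℝ => x^3) := by
  rw [isBigO_iff]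
  refine ⟨a, ?_⟩
  filter_upwards [mem01] with x hx
  rw [Real.norm_eq_abs, Real.norm_eq_abs, abs_pow, abs_of_pos hx.1]
  exact vF_est ha hx.1 hx.2

lemma vF_O1 (ha : 0 < a) : (fun x => vF a x) =O[𝓝[>](0:ℝ)] (fun x : ℝ => x^1) := by
  have h1 := (vF_O3 ha).trans (pow_O_pow (by norm_num : 1 ≤ 3))
  have h2 : (fun x => P2 a x) =O[𝓝[>](0:ℝ)] (fun x : ℝ => x^1) := lin_O1 _ _
  exact (h1.add h2).congr_left (fun x => by ring)

lemma tendsto_pow1 : Filter.Tendsto (fun x : ℝ => x^1) (𝓝[>](0:ℝ)) (𝓝 0) := by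
  have h : Filter.Tendsto (fun x : ℝ => x^1) (𝓝 (0:ℝ)) (𝓝 ((0:ℝ)^1)) :=
    (continuous_pow 1).tendsto (0:ℝ)
  rw [show ((0:ℝ)^1 : ℝ) = 0 by norm_num] at h
  exact h.mono_left nhdsWithin_le_nhds

lemma vF_tendsto (ha : 0 < a) : Filter.Tendsto (vF a) (𝓝[>](0:ℝ)) (𝓝 0) :=
  (vF_O1 ha).trans_tendsto tendsto_pow1

lemma AF_O3 (ha : 0 < a) : (fun x => AF a x) =O[𝓝[>](0:ℝ)] (fun x : ℝ => x^3) := by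
  have h1' := (binom_isBigO (1/a)).comp_tendsto (vF_tendsto ha)
  simp only [Function.comp_def] at h1'
  have h2 : (fun x => (vF a x)^3) =O[𝓝[>](0:ℝ)] (fun x : ℝ => x^3) :=
    ((vF_O1 ha).pow 3).congr_right (fun x => by ring)
  have h3 := h1'.trans h2
  -- explicit polynomial part
  have ha1 : a + 1 ≠ 0 := by positivity
  have ha2 : a + 2 ≠ 0 := by positivity
  have ha0 : a ≠ 0 := ne_of_gt ha
  have hCpoly : (fun x : ℝ => (1/a)*P2 a x + (1/a)*((1/a)-1)/2*(P2 a x)^2 - (W1 a*x + W2 a*x^2))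
      =O[𝓝[>](0:ℝ)] (fun x : ℝ => x^3) := by
    have heq : ∀ x : ℝ, (1/a)*P2 a x + (1/a)*((1/a)-1)/2*(P2 a x)^2 - (W1 a*x + W2 a*x^2)
        = x^3 * ((-((1/a)*((1/a)-1)/2)*a^2/((a+1)*(a+2)))
            + ((1/a)*((1/a)-1)/2*(a/(2*(a+2)))^2) * x) := by
      intro x
      unfold P2 W1 W2
      field_simp
      ring
    have hb : (fun x : ℝ => ((-((1/a)*((1/a)-1)/2)*a^2/((a+1)*(a+2)))
        + ((1/a)*((1/a)-1)/2*(a/(2*(a+2)))^2) * x)) =O[𝓝[>](0:ℝ)] (fun _ : ℝ => (1:ℝ)) := by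
      apply Filter.Tendsto.isBigO_one
      exact ((continuous_const.add (continuous_const.mul continuous_id)).tendsto
        (0:ℝ)).mono_left nhdsWithin_le_nhds
    exact (((isBigO_refl (fun x : ℝ => x^3) _).mul hb).congr_right
      (fun x => by ring)).congr_left (fun x => (heq x).symm)
  have hsum : (fun x => vF a x + P2 a x) =O[𝓝[>](0:ℝ)] (fun _ : ℝ => (1:ℝ)) := by
    apply Filter.Tendsto.isBigO_one
    have hP : Filter.Tendsto (fun x => P2 a x) (𝓝[>](0:ℝ)) (𝓝 0) :=
      (lin_O1 _ _).trans_tendsto tendsto_pow1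
    simpa using (vF_tendsto ha).add hP
  have hB : (fun x => (vF a x)^2 - (P2 a x)^2) =O[𝓝[>](0:ℝ)] (fun x : ℝ => x^3) := by
    have := (vF_O3 ha).mul hsum
    exact (this.congr_right (fun x => by ring)).congr_left (fun x => by ring)
  have h4 : (fun x => (1/a)*vF a x + (1/a)*((1/a)-1)/2*(vF a x)^2 - (W1 a*x + W2 a*x^2))
      =O[𝓝[>](0:ℝ)] (fun x : ℝ => x^3) := by
    have hA' := (vF_O3 ha).const_mul_left (1/a)
    have hB' := hB.const_mul_left ((1/a)*((1/a)-1)/2)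
    exact ((hA'.add hB').add hCpoly).congr_left (fun x => by ring)
  exact (h3.add h4).congr_left (fun x => by unfold AF wF; ring)

lemma wF_O1 (ha : 0 < a) : (fun x => wF a x) =O[𝓝[>](0:ℝ)] (fun x : ℝ => x^1) := by
  have h1 := (AF_O3 ha).trans (pow_O_pow (by norm_num : 1 ≤ 3))
  exact (h1.add (lin_O1 (W1 a) (W2 a))).congr_left (fun x => by unfold AF; ring)

lemma wF_tendsto (ha : 0 < a) : Filter.Tendsto (wF a) (𝓝[>](0:ℝ)) (𝓝 0) :=
  (wF_O1 ha).trans_tendsto tendsto_pow1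

lemma psiF_eq (ha : 0 < a) {x : ℝ} (hx : 0 < x) : psiF a x = x * (1 + wF a x) := by
  have hG : 0 < lowGamma a x := lowGamma_pos ha hx
  have hxa : (0:ℝ) < x ^ a := Real.rpow_pos_of_pos hx a
  have h1v : 1 + vF a x = a * lowGamma a x / x ^ a := by unfold vF; ring
  have hsplit : a * lowGamma a x = x^a * (a * lowGamma a x / x^a) := by field_simp
  unfold psiF wF
  rw [hsplit, Real.mul_rpow hxa.le (by positivity), ← Real.rpow_mul hx.le,
    mul_one_div_cancel (ne_of_gt ha), Real.rpow_one, ← h1v]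
  ring
end D

section E
variable {a : ℝ}

lemma key_O (ha : 0 < a) :
    (fun x : ℝ => x - (psiF a x + (psiF a x)^2/(a+1)
        + (3*a+5)*(psiF a x)^3/(2*(a+1)^2*(a+2))))
      =O[𝓝[>](0:ℝ)] fun x : ℝ => (psiF a x)^4 := by
  have ha1 : a + 1 ≠ 0 := by positivity
  have ha2 : a + 2 ≠ 0 := by positivity
  have hwO := wF_O1 ha
  have hA := AF_O3 ha
  have hw2 : (fun x => (wF a x)^2) =O[𝓝[>](0:ℝ)] (fun x : ℝ => x^2) :=
    (hwO.pow 2).congr_right (fun x => by ring)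
  have t1 : (fun x : ℝ => x * AF a x) =O[𝓝[>](0:ℝ)] (fun x : ℝ => x^4) := by
    have := (isBigO_refl (fun x : ℝ => x) (𝓝[>](0:ℝ))).mul hA
    exact this.congr_right (fun x => by ring)
  have inner2 : (fun x : ℝ => 2*AF a x + 2*W2 a*x^2 + (wF a x)^2)
      =O[𝓝[>](0:ℝ)] (fun x : ℝ => x^2) := by
    have i1 := (hA.trans (pow_O_pow (by norm_num : 2 ≤ 3))).const_mul_left 2
    have i2 := (isBigO_refl (fun x : ℝ => x^2) (𝓝[>](0:ℝ))).const_mul_left (2*W2 a)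
    exact ((i1.add i2).add hw2).congr_left (fun x => by ring)
  have t2 : (fun x : ℝ => (2*AF a x + 2*W2 a*x^2 + (wF a x)^2) * x^2/(a+1))
      =O[𝓝[>](0:ℝ)] (fun x : ℝ => x^4) := by
    have := ((inner2.mul (isBigO_refl (fun x : ℝ => x^2) _)).const_mul_left (1/(a+1)))
    exact (this.congr_right (fun x => by ring)).congr_left (fun x => one_div_mul_eq_div _ _)
  have inner3 : (fun x : ℝ => 3*wF a x + 3*(wF a x)^2 + (wF a x)^3)
      =O[𝓝[>](0:ℝ)] (fun x : ℝ => x^1) := by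
    have i1 := hwO.const_mul_left 3
    have i2 := (hw2.trans (pow_O_pow (by norm_num : 1 ≤ 2))).const_mul_left 3
    have i3 : (fun x => (wF a x)^3) =O[𝓝[>](0:ℝ)] (fun x : ℝ => x^1) :=
      ((hwO.pow 3).congr_right (fun x => by ring)).trans (pow_O_pow (by norm_num : 1 ≤ 3))
    exact (i1.add i2).add i3
  have t3 : (fun x : ℝ => (3*a+5)/(2*(a+1)^2*(a+2))*x^3*(3*wF a x + 3*(wF a x)^2 + (wF a x)^3))
      =O[𝓝[>](0:ℝ)] (fun x : ℝ => x^4) := by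
    have := ((isBigO_refl (fun x : ℝ => x^3) (𝓝[>](0:ℝ))).mul inner3).const_mul_left
      ((3*a+5)/(2*(a+1)^2*(a+2)))
    exact (this.congr_right (fun x => by ring)).congr_left (fun x => by ring)
  have hGO : (fun x : ℝ => -(x * AF a x) - (2*AF a x + 2*W2 a*x^2 + (wF a x)^2) * x^2/(a+1)
      - (3*a+5)/(2*(a+1)^2*(a+2))*x^3*(3*wF a x + 3*(wF a x)^2 + (wF a x)^3))
      =O[𝓝[>](0:ℝ)] (fun x : ℝ => x^4) :=
    (t1.neg_left.sub t2).sub t3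
  have hfeq : (fun x : ℝ => x - (psiF a x + (psiF a x)^2/(a+1)
        + (3*a+5)*(psiF a x)^3/(2*(a+1)^2*(a+2))))
      =ᶠ[𝓝[>](0:ℝ)] (fun x : ℝ => -(x * AF a x)
        - (2*AF a x + 2*W2 a*x^2 + (wF a x)^2) * x^2/(a+1)
        - (3*a+5)/(2*(a+1)^2*(a+2))*x^3*(3*wF a x + 3*(wF a x)^2 + (wF a x)^3)) := by
    filter_upwards [mem01] with x hx
    rw [psiF_eq ha hx.1]
    unfold AF W1 W2
    field_simp
    ring
  have hmain : (fun x : ℝ => x - (psiF a x + (psiF a x)^2/(a+1)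
        + (3*a+5)*(psiF a x)^3/(2*(a+1)^2*(a+2))))
      =O[𝓝[>](0:ℝ)] (fun x : ℝ => x^4) := hGO.congr' hfeq.symm EventuallyEq.rfl
  have hψ4 : (fun x : ℝ => x^4) =O[𝓝[>](0:ℝ)] (fun x : ℝ => (psiF a x)^4) := by
    rw [isBigO_iff]
    refine ⟨16, ?_⟩
    have hsm : ∀ᶠ x in 𝓝[>](0:ℝ), dist (wF a x) 0 < 1/2 :=
      Metric.tendsto_nhds.mp (wF_tendsto ha) (1/2) (by norm_num)
    filter_upwards [mem01, hsm] with x hx hw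
    rw [Real.dist_eq, sub_zero] at hw
    have hw' : 1/2 ≤ 1 + wF a x := by
      have := abs_le.1 hw.le
      linarith [this.1]
    rw [psiF_eq ha hx.1, Real.norm_eq_abs, Real.norm_eq_abs, abs_pow, abs_pow,
      abs_of_pos hx.1, abs_of_pos (by nlinarith [hx.1] : (0:ℝ) < x * (1 + wF a x))]
    have h16 : (1/2:ℝ)^4 ≤ (1 + wF a x)^4 := pow_le_pow_left₀ (by norm_num) hw' 4
    have hx4 : (0:ℝ) < x^4 := pow_pos hx.1 4
    rw [mul_pow]
    nlinarith [hx4, h16]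
  exact hmain.trans hψ4
end E

theorem stmt14 (a : ℝ) (ha : 0 < a) (x : ℝ → ℝ)
    (hx : ∀ p ∈ Set.Ioo (0:ℝ) 1, 0 < x p ∧ Pfun a (x p) = p) :
    (fun p : ℝ => x p - ((p * Real.Gamma (a + 1)) ^ (1 / a)
        + ((p * Real.Gamma (a + 1)) ^ (1 / a)) ^ 2 / (a + 1)
        + (3 * a + 5) * ((p * Real.Gamma (a + 1)) ^ (1 / a)) ^ 3 /
            (2 * (a + 1) ^ 2 * (a + 2))))
      =O[𝓝[>] 0] fun p : ℝ => ((p * Real.Gamma (a + 1)) ^ (1 / a)) ^ 4 := by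
  have hΓ : 0 < Real.Gamma a := Real.Gamma_pos_of_pos ha
  have hΓ1 : Real.Gamma (a+1) = a * Real.Gamma a := Real.Gamma_add_one (ne_of_gt ha)
  have hrel : ∀ p ∈ Set.Ioo (0:ℝ) 1, p * Real.Gamma (a+1) = a * lowGamma a (x p) := by
    intro p hp
    obtain ⟨hxp, hP⟩ := hx p hp
    unfold Pfun at hP
    rw [div_eq_iff (ne_of_gt hΓ)] at hP
    rw [hΓ1, hP]
    ring
  have hev : ∀ᶠ p in 𝓝[>](0:ℝ), p ∈ Set.Ioo (0:ℝ) 1 :=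
    Ioo_mem_nhdsGT_of_mem ⟨le_refl 0, one_pos⟩
  have htend0 : Filter.Tendsto x (𝓝[>](0:ℝ)) (𝓝 0) := by
    rw [Metric.tendsto_nhds]
    intro ε hε
    have hm : 0 < min ε 1 := by positivity
    have hδ : 0 < lowGamma a (min ε 1) / Real.Gamma a :=
      div_pos (lowGamma_pos ha hm) hΓ
    filter_upwards [Ioo_mem_nhdsGT_of_mem
      (⟨le_refl 0, hδ⟩ : (0:ℝ) ∈ Set.Ico 0 (lowGamma a (min ε 1) / Real.Gamma a)), hev]
      with p hpδ hp01
    obtain ⟨hxp, hP⟩ := hx p hp01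
    unfold Pfun at hP
    rw [div_eq_iff (ne_of_gt hΓ)] at hP
    have hlt : x p < min ε 1 := by
      by_contra hcon
      push_neg at hcon
      have h1 : lowGamma a (min ε 1) ≤ lowGamma a (x p) := lowGamma_mono ha hm hcon
      have h2 : p * Real.Gamma a < lowGamma a (min ε 1) := by
        have := hpδ.2
        rw [lt_div_iff₀ hΓ] at this
        linarith
      rw [hP] at h1
      linarith
    rw [Real.dist_eq, sub_zero, abs_of_pos hxp]
    exact lt_of_lt_of_le hlt (min_le_left _ _)
  have htend : Filter.Tendsto x (𝓝[>](0:ℝ)) (𝓝[>](0:ℝ)) := by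
    rw [tendsto_nhdsWithin_iff]
    exact ⟨htend0, hev.mono (fun p hp => (hx p hp).1)⟩
  have hcomp := (key_O ha).comp_tendsto htend
  simp only [Function.comp_def] at hcomp
  refine hcomp.congr' ?_ ?_
  · filter_upwards [hev] with p hp
    rw [hrel p hp]
    rfl
  · filter_upwards [hev] with p hp
    rw [hrel p hp]
    rfl
end
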